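/- arXiv:2410.17224 — 8 statements merged into one kernel-verified Lean document; each statement's English description precedes it below -/
import Mathlib

section
/- Let U, V ⊆ ℂ be open sets, let x : U → V be holomorphic with x'(z) ≠ 0 for every z ∈ U, let ℏ ∈ ℂ, let Q : V → ℂ be a function, and let Y : V → ℂ be holomorphic satisfying ℏ·Y'(w) = Y(w)² − Q(w) for all w ∈ V. Define Ỹ(z) := Y(x(z))·x'(z) + (ℏ/2)·x''(z)/x'(z) and Q̃(z) := Q(x(z))·x'(z)² − (ℏ²/2)·(x'''(z)/x'(z) − (3/2)·(x''(z)/x'(z))²). Then ℏ·Ỹ'(z) = Ỹ(z)² − Q̃(z) for all z ∈ U. -/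
/-!
With `p := x''/x'` one has `p' = x'''/x' - p²`, so the Schwarzian is `p' - p²/2`. Differentiating
`Ỹ = (Y ∘ x)·x' + (ℏ/2)·p` by the chain rule, the cross terms `ℏ·Y(x)·x'' = ℏ·Y(x)·x'·p` of `ℏ·Ỹ'`
and `Ỹ²` cancel, the terms in `Y` and `Q` collect into `(ℏ·Y' - Y² + Q)(x)·x'² = 0`, and the
remaining `ℏ²` terms cancel by the Schwarzian identity. Holomorphy of `x` on the open set `U`
supplies the derivatives `x''` and `x'''`.
-/

variable {𝕜 : Type*} [NontriviallyNormedField 𝕜]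

noncomputable def schwarzian (x : 𝕜 → 𝕜) (z : 𝕜) : 𝕜 :=
  deriv (deriv (deriv x)) z / deriv x z - 3 / 2 * (deriv (deriv x) z / deriv x z) ^ 2

theorem deriv_deriv_div_deriv {x : 𝕜 → 𝕜} {z : 𝕜} (hx1 : DifferentiableAt 𝕜 (deriv x) z)
    (hx2 : DifferentiableAt 𝕜 (deriv (deriv x)) z) (hx0 : deriv x z ≠ 0) :
    deriv (fun w => deriv (deriv x) w / deriv x w) z
      = deriv (deriv (deriv x)) z / deriv x z - (deriv (deriv x) z / deriv x z) ^ 2 := by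
  rw [deriv_fun_div hx2 hx1 hx0]
  field_simp

theorem schwarzian_eq_deriv_sub [CharZero 𝕜] {x : 𝕜 → 𝕜} {z : 𝕜}
    (hx1 : DifferentiableAt 𝕜 (deriv x) z) (hx2 : DifferentiableAt 𝕜 (deriv (deriv x)) z)
    (hx0 : deriv x z ≠ 0) :
    schwarzian x z = deriv (fun w => deriv (deriv x) w / deriv x w) z
      - (deriv (deriv x) z / deriv x z) ^ 2 / 2 := by
  rw [deriv_deriv_div_deriv hx1 hx2 hx0, schwarzian]
  ring

theorem riccati_pullback [CharZero 𝕜] {x Y Q : 𝕜 → 𝕜} {ℏ z : 𝕜}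
    (hY : DifferentiableAt 𝕜 Y (x z)) (hx : DifferentiableAt 𝕜 x z)
    (hx1 : DifferentiableAt 𝕜 (deriv x) z) (hx2 : DifferentiableAt 𝕜 (deriv (deriv x)) z)
    (hx0 : deriv x z ≠ 0) (hRic : ℏ * deriv Y (x z) = Y (x z) ^ 2 - Q (x z)) :
    ℏ * deriv (fun w => Y (x w) * deriv x w + ℏ / 2 * (deriv (deriv x) w / deriv x w)) z
      = (Y (x z) * deriv x z + ℏ / 2 * (deriv (deriv x) z / deriv x z)) ^ 2
        - (Q (x z) * deriv x z ^ 2 - ℏ ^ 2 / 2 * schwarzian x z) := by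
  have hYt_deriv : HasDerivAt
      (fun w => Y (x w) * deriv x w + ℏ / 2 * (deriv (deriv x) w / deriv x w))
      (deriv Y (x z) * deriv x z * deriv x z + Y (x z) * deriv (deriv x) z
        + ℏ / 2 * deriv (fun w => deriv (deriv x) w / deriv x w) z) z :=
    ((hY.hasDerivAt.comp z hx.hasDerivAt).mul hx1.hasDerivAt).add
      ((hx2.fun_div hx1 hx0).hasDerivAt.const_mul _)
  have hpx : deriv (deriv x) z / deriv x z * deriv x z = deriv (deriv x) z :=
    div_mul_cancel₀ _ hx0
  rw [hYt_deriv.deriv, schwarzian_eq_deriv_sub hx1 hx2 hx0]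
  linear_combination deriv x z ^ 2 * hRic - ℏ * Y (x z) * hpx

theorem riccati_transformation_law_general
    (U V : Set ℂ) (hU : IsOpen U)
    (x : ℂ → ℂ) (hxV : Set.MapsTo x U V)
    (hx : ∀ z ∈ U, DifferentiableAt ℂ x z)
    (hx' : ∀ z ∈ U, deriv x z ≠ 0)
    (ℏ : ℂ) (Q : ℂ → ℂ) (Y : ℂ → ℂ)
    (hY : ∀ w ∈ V, DifferentiableAt ℂ Y w)
    (hRic : ∀ w ∈ V, ℏ * deriv Y w = Y w ^ 2 - Q w)
    (Yt Qt : ℂ → ℂ)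
    (hYt : ∀ z, Yt z = Y (x z) * deriv x z + (ℏ / 2) * (deriv (deriv x) z / deriv x z))
    (hQt : ∀ z, Qt z = Q (x z) * (deriv x z) ^ 2
      - (ℏ ^ 2 / 2) * (deriv (deriv (deriv x)) z / deriv x z
        - (3 / 2) * (deriv (deriv x) z / deriv x z) ^ 2)) :
    ∀ z ∈ U, ℏ * deriv Yt z = Yt z ^ 2 - Qt z := by
  intro z hz
  have hx_an : AnalyticOnNhd ℂ x U :=
    DifferentiableOn.analyticOnNhd (fun w hw => (hx w hw).differentiableWithinAt) hU
  have hx1 : DifferentiableAt ℂ (deriv x) z := (hx_an.deriv z hz).differentiableAt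
  have hx2 : DifferentiableAt ℂ (deriv (deriv x)) z := (hx_an.deriv.deriv z hz).differentiableAt
  obtain rfl : Yt = _ := funext hYt
  obtain rfl : Qt = _ := funext hQt
  exact riccati_pullback (hY _ (hxV hz)) (hx z hz) hx1 hx2 (hx' z hz) (hRic _ (hxV hz))

/-- Coordinate transformation law of the Riccati equation `ℏ∂Y = Y² − Q`:
the Riccati unknown fails to transform as a differential form exactly by the
first-order term `(ℏ/2)·x''/x'`, and the potential transforms as a quadratic
differential up to an `ℏ²`-Schwarzian correction. -/
theorem riccati_transformation_law
    (U V : Set ℂ) (hU : IsOpen U) (hV : IsOpen V)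
    (x : ℂ → ℂ) (hxV : Set.MapsTo x U V)
    (hx : ∀ z ∈ U, DifferentiableAt ℂ x z)
    (hx' : ∀ z ∈ U, deriv x z ≠ 0)
    (ℏ : ℂ) (Q : ℂ → ℂ) (Y : ℂ → ℂ)
    (hY : ∀ w ∈ V, DifferentiableAt ℂ Y w)
    (hRic : ∀ w ∈ V, ℏ * deriv Y w = Y w ^ 2 - Q w)
    (Yt Qt : ℂ → ℂ)
    (hYt : ∀ z, Yt z = Y (x z) * deriv x z + (ℏ / 2) * (deriv (deriv x) z / deriv x z))
    (hQt : ∀ z, Qt z = Q (x z) * (deriv x z) ^ 2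
      - (ℏ ^ 2 / 2) * (deriv (deriv (deriv x)) z / deriv x z
        - (3 / 2) * (deriv (deriv x) z / deriv x z) ^ 2)) :
    ∀ z ∈ U, ℏ * deriv Yt z = Yt z ^ 2 - Qt z :=
  riccati_transformation_law_general U V hU x hxV hx hx' ℏ Q Y hY hRic Yt Qt hYt hQt
end

section
/- Let f be holomorphic on an open neighbourhood of 0 in ℂ with f(0) ≠ 0. Then there exist an open set V ⊆ ℂ containing 0 and an injective holomorphic map w : V → ℂ with w(0) = 0 and w'(0) ≠ 0 such that f(z)/z² = f(0)·w'(z)²/w(z)² for every z ∈ V with z ≠ 0. -/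
/-!
Write `f = f 0 · h²` near `0` with `h` holomorphic and `h 0 = 1` (a branch of `√(f / f 0)`).
The condition on `w` says `w'/w = h/z`, i.e. `w'/w - 1/z = (h - 1)/z`, which is holomorphic; so
`w z = z · exp (P z)` with `P` a primitive of `(h - 1)/z` on a disc. Then `w' = exp P · h`, so
`w'(0) ≠ 0`, and `w` is injective near `0` by the inverse function theorem.
-/

open Complex Metric Set Filter
open scoped Topology

lemma exists_ball_mul_sq_eq {U : Set ℂ} (hU : IsOpen U) {a : ℂ} (haU : a ∈ U) {f : ℂ → ℂ}
    (hf : DifferentiableOn ℂ f U) (hfa : f a ≠ 0) :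
    ∃ r > 0, ball a r ⊆ U ∧ ∃ h : ℂ → ℂ, DifferentiableOn ℂ h (ball a r) ∧ h a = 1 ∧
      ∀ z ∈ ball a r, f a * h z ^ 2 = f z := by
  have hslit : ∀ᶠ z in 𝓝 a, f z / f a ∈ slitPlane := by
    refine ((hf.continuousOn.continuousAt (hU.mem_nhds haU)).div_const (f a)).eventually_mem
      (isOpen_slitPlane.mem_nhds ?_)
    simp [div_self hfa, one_mem_slitPlane]
  obtain ⟨r, hr, hrU⟩ := Metric.mem_nhds_iff.mp (inter_mem (hU.mem_nhds haU) hslit)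
  refine ⟨r, hr, fun z hz => (hrU hz).1, fun z => exp (log (f z / f a) / 2), ?_, ?_, ?_⟩
  · intro z hz
    have hfz := (hf.differentiableAt (hU.mem_nhds (hrU hz).1)).div_const (f a)
    exact (((hfz.clog (hrU hz).2).div_const 2).cexp).differentiableWithinAt
  · simp [div_self hfa]
  · intro z hz
    rw [← exp_nat_mul, Nat.cast_ofNat, mul_div_cancel₀ _ two_ne_zero,
      exp_log (slitPlane_ne_zero (hrU hz).2), mul_div_cancel₀ _ hfa]

lemma exists_hasDerivAt_mul_cexp {r : ℝ} (hr : 0 < r) {h : ℂ → ℂ}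
    (hh : DifferentiableOn ℂ h (ball 0 r)) (hh0 : h 0 = 1) :
    ∃ P : ℂ → ℂ, ∀ z ∈ ball (0 : ℂ) r,
      HasDerivAt (fun z => z * exp (P z)) (exp (P z) * h z) z := by
  obtain ⟨P, hP⟩ := ((differentiableOn_dslope (ball_mem_nhds 0 hr)).mpr hh).isExactOn_ball
  refine ⟨P, fun z hz => ?_⟩
  have hslope : z * dslope h 0 z = h z - 1 := by
    simpa [hh0] using sub_smul_dslope h 0 z
  refine ((hasDerivAt_id' z).fun_mul (hP z hz).cexp).congr_deriv ?_
  linear_combination exp (P z) * hslope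

lemma HasStrictDerivAt.exists_isOpen_injOn {𝕜 : Type*} [NontriviallyNormedField 𝕜]
    [CompleteSpace 𝕜] {f : 𝕜 → 𝕜} {f' a : 𝕜} (hf : HasStrictDerivAt f f' a) (hf' : f' ≠ 0) :
    ∃ t : Set 𝕜, IsOpen t ∧ a ∈ t ∧ InjOn f t := by
  have hF := hf.hasStrictFDerivAt_equiv hf'
  exact ⟨_, (hF.toOpenPartialHomeomorph f).open_source, hF.mem_toOpenPartialHomeomorph_source,
    (hF.toOpenPartialHomeomorph f).injOn⟩

/-- Local normal form of a quadratic differential `f(z)·z^{−2}·dz²` at a double pole: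
there is a local coordinate change `w`, fixing `0` with `w'(0) ≠ 0`, such that
`f(z)/z² = f(0)·w'(z)²/w(z)²` near `0` (where `r = f(0)` is the quadratic residue). -/
theorem quadratic_differential_normal_form_double_pole
    (U : Set ℂ) (hU : IsOpen U) (h0U : (0 : ℂ) ∈ U)
    (f : ℂ → ℂ) (hf : DifferentiableOn ℂ f U) (hf0 : f 0 ≠ 0) :
    ∃ V : Set ℂ, IsOpen V ∧ (0 : ℂ) ∈ V ∧ V ⊆ U ∧
      ∃ w : ℂ → ℂ, Set.InjOn w V ∧ DifferentiableOn ℂ w V ∧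
        w 0 = 0 ∧ deriv w 0 ≠ 0 ∧
        ∀ z ∈ V, z ≠ 0 → f z / z ^ 2 = f 0 * (deriv w z) ^ 2 / w z ^ 2 := by
  obtain ⟨r, hr, hrU, h, hh, hh0, hfh⟩ := exists_ball_mul_sq_eq hU h0U hf hf0
  obtain ⟨P, hw⟩ := exists_hasDerivAt_mul_cexp hr hh hh0
  set w : ℂ → ℂ := fun z => z * exp (P z)
  have hwd : DifferentiableOn ℂ w (ball 0 r) :=
    fun z hz => (hw z hz).differentiableAt.differentiableWithinAt
  have hw0 : deriv w 0 ≠ 0 := by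
    simp [(hw 0 (mem_ball_self hr)).deriv, hh0, exp_ne_zero]
  obtain ⟨t, ht, h0t, hinj⟩ :=
    (hwd.analyticAt (ball_mem_nhds 0 hr)).hasStrictDerivAt.exists_isOpen_injOn hw0
  refine ⟨ball 0 r ∩ t, isOpen_ball.inter ht, ⟨mem_ball_self hr, h0t⟩,
    inter_subset_left.trans hrU, w, hinj.mono inter_subset_right, hwd.mono inter_subset_left,
    zero_mul _, hw0, ?_⟩
  rintro z ⟨hz, -⟩ hz0
  rw [(hw z hz).deriv, ← hfh z hz]
  simp only [w]
  field_simp [exp_ne_zero]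
end

section
/- Let k ≥ 2 be an integer and let f be holomorphic on an open neighbourhood of 0 in ℂ with f(0) ≠ 0. Then there exist an open set V ⊆ ℂ containing 0, an injective holomorphic map w : V → ℂ with w(0) = 0 and w'(0) ≠ 0, and a constant b ∈ ℂ, such that f(z)/z^{2k} = (1 + b·w(z)^{k−1})²·w'(z)²/w(z)^{2k} for every z ∈ V with z ≠ 0. -/
/-!
Write `f = g²` near `0` and put `j = k - 1`; the claim is the square of
`(1 + b w^j) w' / w^(j+1) = g / z^(j+1)`. Solving `z h' - j h + b z^j = g` by power series
(`b` is the coefficient of `z^j` in `g`, the one that cannot be absorbed) gives the primitive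
`z^(-j) h + b log z` of the right-hand side, while `-w^(-j) / j + b log w` is one of the left-hand
side. For `w = z exp v`, equating the two primitives (times `-j z^j`) is the implicit equation
`exp (-j v) + j (h z - b z^j v) = 0`, whose `v`-derivative at `z = 0` is `-j g(0) ≠ 0`.
Finally `w'(0) = exp (v 0) ≠ 0`, so `w` is injective near `0`.
-/

open Filter Topology Complex FormalMultilinearSeries

theorem exists_analyticAt_sq_eq {f : ℂ → ℂ} {x : ℂ} (hf : AnalyticAt ℂ f x) (hfx : f x ≠ 0) :
    ∃ g : ℂ → ℂ, AnalyticAt ℂ g x ∧ ∀ᶠ z in 𝓝 x, g z ^ 2 = f z := by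
  obtain ⟨c, hc⟩ := IsAlgClosed.exists_pow_nat_eq (f x) two_pos
  refine ⟨fun z => c * cexp (log (f z / f x) / 2), ?_, ?_⟩
  · refine analyticAt_const.mul (analyticAt_cexp.comp ((analyticAt_clog ?_).comp
      (hf.div analyticAt_const hfx) |>.div analyticAt_const two_ne_zero))
    simp [hfx, one_mem_slitPlane]
  · filter_upwards [hf.continuousAt.eventually_ne hfx] with z hz
    rw [mul_pow, ← exp_nat_mul, Nat.cast_ofNat, mul_div_cancel₀ _ two_ne_zero,
      exp_log (div_ne_zero hz hfx), hc]
    field_simp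

theorem HasFPowerSeriesAt.eventually_hasSum_mul_deriv {𝕜 : Type*} [NontriviallyNormedField 𝕜]
    [CompleteSpace 𝕜] {p : FormalMultilinearSeries 𝕜 𝕜 𝕜} {f : 𝕜 → 𝕜}
    (hf : HasFPowerSeriesAt f p 0) :
    ∀ᶠ z in 𝓝 0, HasSum (fun n => n * p.coeff n * z ^ n) (z * deriv f z) := by
  obtain ⟨r, hr⟩ := hf
  filter_upwards [Metric.eball_mem_nhds 0 hr.r_pos] with z hz
  have hsum := (hr.fderiv.hasSum (by simpa using hz)).mapL (ContinuousLinearMap.apply 𝕜 𝕜 z)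
  simp only [ContinuousLinearMap.apply_apply, derivSeries_apply_diag, zero_add] at hsum
  simp only [apply_eq_pow_smul_coeff] at hsum
  have hfz : fderiv 𝕜 f z z = z * deriv f z := by
    rw [← fderiv_apply_one_eq_deriv, ← smul_eq_mul, ← map_smul, smul_eq_mul, mul_one]
  rw [← hasSum_nat_add_iff' 1]
  simpa [hfz, smul_eq_mul, mul_comm, mul_left_comm, mul_assoc] using hsum

theorem exists_analyticAt_mul_deriv_sub_eq (j : ℕ) {g : ℂ → ℂ} (hg : AnalyticAt ℂ g 0) :
    ∃ (h : ℂ → ℂ) (b : ℂ), AnalyticAt ℂ h 0 ∧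
      ∀ᶠ z in 𝓝 0, z * deriv h z - j * h z + b * z ^ j = g z := by
  obtain ⟨p, r, hpr⟩ := hg
  -- at the resonant index `n = j` this is `p.coeff j / 0 = 0`; that coefficient becomes `b`
  set c : ℕ → ℂ := fun n => p.coeff n / (n - j)
  have hc : ∀ n : ℕ, ((n : ℂ) - j) * c n = p.coeff n - if n = j then p.coeff j else 0 := by
    intro n
    by_cases hn : n = j
    · simp [c, hn]
    · have : (n : ℂ) - j ≠ 0 := sub_ne_zero.mpr (Nat.cast_injective.ne hn)
      simp [c, hn, mul_div_cancel₀ _ this]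
  have hc_norm : ∀ n, ‖c n‖ ≤ ‖p.coeff n‖ := by
    intro n
    by_cases hn : n = j
    · simp [c, hn]
    · have hnj : (n : ℤ) - j ≠ 0 := by omega
      have : (1 : ℝ) ≤ ‖(n : ℂ) - j‖ := by
        rw [show (n : ℂ) - j = ((n - j : ℤ) : ℂ) by push_cast; ring, Complex.norm_intCast]
        exact_mod_cast Int.one_le_abs hnj
      rw [norm_div]
      exact div_le_self (norm_nonneg _) this
  set q := ofScalars ℂ c
  have hqr : r ≤ q.radius := hpr.r_le.trans <| radius_le_of_le fun n => by
    simpa [q, ofScalars_norm, ← norm_apply_eq_norm_coef] using hc_norm n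
  have hq : HasFPowerSeriesAt q.sum q 0 :=
    ⟨r, (q.hasFPowerSeriesOnBall (hpr.r_pos.trans_le hqr)).mono hpr.r_pos hqr⟩
  refine ⟨q.sum, p.coeff j, hq.analyticAt, ?_⟩
  filter_upwards [hq.eventually_hasSum_mul_deriv, hasFPowerSeriesAt_iff.mp hq,
    hasFPowerSeriesAt_iff.mp ⟨r, hpr⟩] with z hdh hh hg
  simp only [coeff_ofScalars, zero_add, smul_eq_mul, q] at hdh hh hg
  have hlhs := hdh.sub (hh.mul_left (j : ℂ))
  have hrhs := hg.sub (hasSum_ite_eq j (z ^ j * p.coeff j))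
  have hterms : (fun n : ℕ => n * c n * z ^ n - j * (z ^ n * c n)) =
      fun n => z ^ n * p.coeff n - if n = j then z ^ j * p.coeff j else 0 := by
    funext n
    have hcn := hc n
    split_ifs at hcn ⊢ with hn
    · subst hn; linear_combination z ^ n * hcn
    · linear_combination z ^ n * hcn
  linear_combination hlhs.unique (hterms ▸ hrhs)

theorem ContinuousLinearMap.isInvertible_of_apply_one_ne_zero {𝕜 : Type*}
    [NontriviallyNormedField 𝕜] {L : 𝕜 →L[𝕜] 𝕜} (hL : L 1 ≠ 0) : L.IsInvertible :=
  .of_inverse (g := (L 1)⁻¹ • .id 𝕜 𝕜) (by ext; simp [hL]) (by ext; simp [hL])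

theorem ContDiffAt.exists_contDiffAt_eventually_apply_eq {𝕜 : Type*} [RCLike 𝕜]
    {F : 𝕜 × 𝕜 → 𝕜} {x₀ y₀ d : 𝕜} {n : WithTop ℕ∞} (hF : ContDiffAt 𝕜 n F (x₀, y₀))
    (hn : n ≠ 0) (hd : HasDerivAt (fun y => F (x₀, y)) d y₀) (hd₀ : d ≠ 0) :
    ∃ ψ : 𝕜 → 𝕜, ContDiffAt 𝕜 n ψ x₀ ∧ ∀ᶠ x in 𝓝 x₀, F (x, ψ x) = F (x₀, y₀) := by
  have hpartial : (fderiv 𝕜 F (x₀, y₀) ∘L .inr 𝕜 𝕜 𝕜) 1 = d := by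
    simpa using ((hF.differentiableAt hn).hasFDerivAt.comp_hasDerivAt y₀
      ((hasDerivAt_const y₀ x₀).prodMk (hasDerivAt_id y₀))).unique hd
  have hinv := ContinuousLinearMap.isInvertible_of_apply_one_ne_zero (hpartial ▸ hd₀)
  exact ⟨hF.implicitFunction hn hinv, hF.contDiffAt_implicitFunction hn hinv,
    hF.eventually_apply_implicitFunction hn hinv⟩

theorem mul_deriv_sub_eq_of_eventually_exp_add_eq_zero {j : ℕ} (hj : j ≠ 0) {h v : ℂ → ℂ}
    {b z v' : ℂ} (hv : HasDerivAt v v' z)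
    (hvh : ∀ᶠ x in 𝓝 z, cexp (-j * v x) + j * (h x - b * x ^ j * v x) = 0) :
    z * deriv h z - j * h z + b * z ^ j = (cexp (-j * v z) + b * z ^ j) * (1 + z * v') := by
  have hj' : (j : ℂ) ≠ 0 := Nat.cast_ne_zero.mpr hj
  have hh : h =ᶠ[𝓝 z] fun x => b * x ^ j * v x - cexp (-j * v x) / j := by
    filter_upwards [hvh] with x hx
    generalize cexp (-j * v x) = E at hx ⊢
    field_simp
    linear_combination hx
  have hh' : HasDerivAt (fun x => b * x ^ j * v x - cexp (-j * v x) / j)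
      (b * (j * z ^ (j - 1)) * v z + b * z ^ j * v' - cexp (-j * v z) * (-j * v') / j) z :=
    (((hasDerivAt_pow j z).const_mul b).mul hv).sub ((hv.const_mul _).cexp.div_const _)
  rw [(hh'.congr_of_eventuallyEq hh).deriv, hh.eq_of_nhds]
  obtain ⟨i, rfl⟩ := Nat.exists_eq_succ_of_ne_zero hj
  rw [Nat.succ_sub_one, pow_succ]
  field_simp
  ring

theorem exists_normalizing_log_coordinate {j : ℕ} (hj : j ≠ 0) {g : ℂ → ℂ}
    (hg : AnalyticAt ℂ g 0) (hg₀ : g 0 ≠ 0) :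
    ∃ (v : ℂ → ℂ) (b : ℂ), ContDiffAt ℂ 1 v 0 ∧
      ∀ᶠ z in 𝓝 0, g z = (cexp (-j * v z) + b * z ^ j) * (1 + z * deriv v z) := by
  obtain ⟨h, b, hh, heuler⟩ := exists_analyticAt_mul_deriv_sub_eq j hg
  have hh₀ : -(j * h 0) = g 0 := by simpa [zero_pow hj] using heuler.self_of_nhds
  have hj' : (j : ℂ) ≠ 0 := Nat.cast_ne_zero.mpr hj
  set F : ℂ × ℂ → ℂ := fun p => cexp (-j * p.2) + j * (h p.1 - b * p.1 ^ j * p.2)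
  set v₀ := -log (g 0) / j
  have hexp : cexp (-j * v₀) = g 0 := by
    rw [show -j * v₀ = log (g 0) by simp only [v₀]; field_simp, exp_log hg₀]
  have hF : ContDiffAt ℂ 1 F (0, v₀) := by
    have := hh.contDiffAt (n := 1)
    fun_prop
  have hF₀ : F (0, v₀) = 0 := by
    simp only [F, hexp, ← hh₀, zero_pow hj]; ring
  have hFd : HasDerivAt (fun y => F (0, y)) (-j * g 0) v₀ := by
    have := ((hasDerivAt_id v₀).const_mul (-j : ℂ)).cexp.add_const (j * h 0)
    simp only [F, zero_pow hj, mul_zero, zero_mul, sub_zero]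
    exact this.congr_deriv (by rw [id_eq, hexp]; ring)
  obtain ⟨v, hv, hvF⟩ := hF.exists_contDiffAt_eventually_apply_eq one_ne_zero hFd
    (mul_ne_zero (neg_ne_zero.mpr hj') hg₀)
  refine ⟨v, b, hv, ?_⟩
  filter_upwards [heuler, hvF.eventually_nhds, hv.eventually (by simp)] with z hz hvFz hvz
  rw [← hz]
  exact mul_deriv_sub_eq_of_eventually_exp_add_eq_zero hj
    (hvz.differentiableAt one_ne_zero).hasDerivAt (hvFz.mono fun x hx => hx.trans hF₀)

theorem HasStrictDerivAt.id_mul_cexp {v : ℂ → ℂ} {v' z : ℂ} (hv : HasStrictDerivAt v v' z) :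
    HasStrictDerivAt (fun x => x * cexp (v x)) (cexp (v z) * (1 + z * v')) z :=
  ((hasStrictDerivAt_id z).mul hv.cexp).congr_deriv (by simp only [id_eq]; ring)

/-- Local normal form of a quadratic differential `f(z)·z^{−2k}·dz²` at a pole of even
order `2k ≥ 4`: there are a local coordinate change `w`, fixing `0` with `w'(0) ≠ 0`,
and a constant `b ∈ ℂ`, such that
`f(z)/z^{2k} = (1 + b·w(z)^{k−1})²·w'(z)²/w(z)^{2k}` near `0`. -/
theorem quadratic_differential_normal_form_even_pole
    (k : ℕ) (hk : 2 ≤ k)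
    (U : Set ℂ) (hU : IsOpen U) (h0U : (0 : ℂ) ∈ U)
    (f : ℂ → ℂ) (hf : DifferentiableOn ℂ f U) (hf0 : f 0 ≠ 0) :
    ∃ V : Set ℂ, IsOpen V ∧ (0 : ℂ) ∈ V ∧ V ⊆ U ∧
      ∃ w : ℂ → ℂ, ∃ b : ℂ, Set.InjOn w V ∧ DifferentiableOn ℂ w V ∧
        w 0 = 0 ∧ deriv w 0 ≠ 0 ∧
        ∀ z ∈ V, z ≠ 0 →
          f z / z ^ (2 * k)
            = (1 + b * w z ^ (k - 1)) ^ 2 * (deriv w z) ^ 2 / w z ^ (2 * k) := by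
  obtain ⟨j, rfl⟩ : ∃ j, k = j + 1 := ⟨k - 1, by omega⟩
  rw [Nat.add_sub_cancel]
  obtain ⟨g, hg, hgf⟩ := exists_analyticAt_sq_eq (hf.analyticAt (hU.mem_nhds h0U)) hf0
  have hg₀ : g 0 ≠ 0 := fun h₀ => hf0 (by simpa [h₀] using hgf.self_of_nhds.symm)
  obtain ⟨v, b, hv, hgv⟩ := exists_normalizing_log_coordinate (j := j) (by omega) hg hg₀
  set w : ℂ → ℂ := fun z => z * cexp (v z)
  have hw : ∀ z, ContDiffAt ℂ 1 v z →
      HasStrictDerivAt w (cexp (v z) * (1 + z * deriv v z)) z := fun z hvz =>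
    HasStrictDerivAt.id_mul_cexp (hvz.hasStrictDerivAt one_ne_zero)
  have hw₀ := hw 0 hv
  have hw₀' : cexp (v 0) * (1 + 0 * deriv v 0) ≠ 0 := by simp
  obtain ⟨V, hVsub, hV, hV₀⟩ := mem_nhds_iff.mp <| (hU.eventually_mem h0U).and <|
    (hv.eventually (by simp)).and <| hgf.and <| hgv.and (hw₀.eventually_left_inverse hw₀')
  refine ⟨V, hV, hV₀, fun z hz => (hVsub hz).1, w, b, ?_, ?_, by simp [w], ?_, ?_⟩
  · intro x hx y hy hxy
    rw [← (hVsub hx).2.2.2.2, ← (hVsub hy).2.2.2.2, hxy]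
  · exact fun z hz => (hw z (hVsub hz).2.1).hasDerivAt.differentiableAt.differentiableWithinAt
  · rwa [hw₀.hasDerivAt.deriv]
  · intro z hz hz₀
    obtain ⟨-, hvz, hgfz, hgvz, -⟩ := hVsub hz
    rw [(hw z hvz).hasDerivAt.deriv, ← hgfz, hgvz]
    simp only [w, neg_mul, exp_neg, exp_nat_mul]
    have hY := exp_ne_zero (v z)
    generalize cexp (v z) = Y at hY ⊢
    field_simp
    ring
end

section
/- Let m : ℕ → ℕ be the sequence defined by m_0 = m_1 = 1 and, for k ≥ 2, m_k = Σ_{i+j=k−2} m_i·m_j + m_{k−1}. Then there exist r > 0 and a holomorphic function g on the open disc {z ∈ ℂ : |z| < r} such that g(0) = 1, g(z) = 1 + z²·g(z)² + z·g(z) for all |z| < r, and for every k the k-th Taylor coefficient of g at 0 equals m_k (that is, g^{(k)}(0)/k! = m_k). In particular, the power series Σ_k m_k z^k has positive radius of convergence. -/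
/-!
Comparing the recurrence termwise with the Catalan recurrence
`C (n + 3) = Σ C (i + 1) C (j + 1) + 2 C (n + 2)` gives `m k ≤ C (k + 1) ≤ 4 ^ (k + 1)`,
so `Σ m k z ^ k` converges for `|z| < 1/4`.
Inside that disc the Cauchy product turns the recurrence into the functional equation, and
uniqueness of power series expansions identifies the Taylor coefficients with the `m k`.
-/

open Finset FormalMultilinearSeries
open scoped NNReal ENNReal

theorem catalan_add_three (n : ℕ) :
    catalan (n + 3) =
      ∑ p ∈ antidiagonal n, catalan (p.1 + 1) * catalan (p.2 + 1) + 2 * catalan (n + 2) := by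
  rw [catalan_succ', Nat.sum_antidiagonal_succ, Nat.sum_antidiagonal_succ']
  simp only [catalan_zero]
  ring

theorem catalan_le_four_pow (n : ℕ) : catalan n ≤ 4 ^ n :=
  calc catalan n ≤ (n + 1) * catalan n := Nat.le_mul_of_pos_left _ n.succ_pos
    _ = n.centralBinom := succ_mul_catalan_eq_centralBinom n
    _ ≤ (2 * n + 1).choose n := Nat.choose_le_choose n (by omega)
    _ ≤ 4 ^ n := Nat.choose_middle_le_pow n

theorem HasSum.eq_of_motzkin_recurrence {R : Type*} [NormedCommRing R] [CompleteSpace R]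
    {a : ℕ → R} (ha : ∀ k, a (k + 2) = ∑ p ∈ antidiagonal k, a p.1 * a p.2 + a (k + 1))
    {z s : R} (hs : HasSum (fun k ↦ a k * z ^ k) s) (hz : Summable fun k ↦ ‖a k * z ^ k‖) :
    s = a 0 + a 1 * z + z ^ 2 * s ^ 2 + z * (s - a 0) := by
  have hsq : HasSum (fun k ↦ (∑ p ∈ antidiagonal k, a p.1 * a p.2) * z ^ k) (s ^ 2) := by
    have := (summable_norm_sum_mul_antidiagonal_of_summable_norm hz hz).of_norm.hasSum
    rw [← tsum_mul_tsum_eq_tsum_sum_antidiagonal_of_summable_norm hz hz, hs.tsum_eq, ← sq]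
      at this
    refine this.congr_fun fun k ↦ ?_
    rw [sum_mul]
    refine sum_congr rfl fun p hp ↦ ?_
    rw [← mem_antidiagonal.mp hp, pow_add]
    ring
  have hshift₁ : HasSum (fun k ↦ a (k + 1) * z ^ (k + 1)) (s - a 0) := by
    simpa using (hasSum_nat_add_iff' 1).mpr hs
  have hshift₂ : HasSum (fun k ↦ a (k + 2) * z ^ (k + 2)) (s - (a 0 + a 1 * z)) := by
    simpa [sum_range_succ] using (hasSum_nat_add_iff' 2).mpr hs
  have hsplit : HasSum (fun k ↦ a (k + 2) * z ^ (k + 2)) (z ^ 2 * s ^ 2 + z * (s - a 0)) := by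
    refine ((hsq.mul_left (z ^ 2)).add (hshift₁.mul_left z)).congr_fun fun k ↦ ?_
    rw [ha]
    ring
  linear_combination hshift₂.unique hsplit

section Motzkin

variable {m : ℕ → ℕ} (hm0 : m 0 = 1) (hm1 : m 1 = 1)
  (hm : ∀ k, 2 ≤ k →
    m k = (∑ p ∈ Finset.HasAntidiagonal.antidiagonal (k - 2), m p.1 * m p.2) + m (k - 1))
include hm

theorem motzkin_add_two (k : ℕ) :
    m (k + 2) = ∑ p ∈ antidiagonal k, m p.1 * m p.2 + m (k + 1) :=
  hm (k + 2) le_add_self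

include hm0 hm1

theorem motzkin_le_catalan_succ (k : ℕ) : m k ≤ catalan (k + 1) := by
  induction k using Nat.strong_induction_on with
  | _ k ih =>
    match k with
    | 0 => simp [hm0]
    | 1 => simp [hm1, catalan_two]
    | n + 2 =>
      have hconv : ∑ p ∈ antidiagonal n, m p.1 * m p.2
          ≤ ∑ p ∈ antidiagonal n, catalan (p.1 + 1) * catalan (p.2 + 1) :=
        sum_le_sum fun p hp ↦ by
          have := mem_antidiagonal.mp hp
          exact Nat.mul_le_mul (ih p.1 (by omega)) (ih p.2 (by omega))
      have hprev : m (n + 1) ≤ catalan (n + 2) := ih (n + 1) (by omega)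
      rw [motzkin_add_two hm, catalan_add_three]
      omega

theorem motzkin_le_four_pow (k : ℕ) : m k ≤ 4 ^ (k + 1) :=
  (motzkin_le_catalan_succ hm0 hm1 hm k).trans (catalan_le_four_pow _)

theorem quarter_le_radius_ofScalars_motzkin :
    ((4⁻¹ : ℝ≥0) : ℝ≥0∞) ≤ (ofScalars ℂ fun k ↦ (m k : ℂ)).radius :=
  (ofScalars ℂ fun k ↦ (m k : ℂ)).le_radius_of_bound 4 fun k ↦ by
    rw [ofScalars_norm, Complex.norm_natCast]
    calc (m k : ℝ) * ((4⁻¹ : ℝ≥0) : ℝ) ^ k ≤ 4 ^ (k + 1) * (4⁻¹ : ℝ) ^ k := by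
          gcongr
          · exact_mod_cast motzkin_le_four_pow hm0 hm1 hm k
          · simp
      _ = 4 := by rw [pow_succ, mul_right_comm, ← mul_pow]; norm_num

theorem summable_motzkin_mul_pow {r : ℝ≥0} (hr : r < 4⁻¹) :
    Summable fun k ↦ (m k : ℝ) * (r : ℝ) ^ k := by
  simpa [ofScalars_norm] using (ofScalars ℂ fun k ↦ (m k : ℂ)).summable_norm_mul_pow
    ((ENNReal.coe_lt_coe.mpr hr).trans_le (quarter_le_radius_ofScalars_motzkin hm0 hm1 hm))

theorem hasFPowerSeriesOnBall_ofScalarsSum_motzkin :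
    HasFPowerSeriesOnBall (ofScalarsSum fun k ↦ (m k : ℂ))
      (ofScalars ℂ fun k ↦ (m k : ℂ)) 0 (4⁻¹ : ℝ≥0) := by
  have hradius := quarter_le_radius_ofScalars_motzkin hm0 hm1 hm
  have hpos : (0 : ℝ≥0∞) < ((4⁻¹ : ℝ≥0) : ℝ≥0∞) := by norm_num
  exact ((ofScalars ℂ fun k ↦ (m k : ℂ)).hasFPowerSeriesOnBall (hpos.trans_le hradius)).mono
    hpos hradius

theorem ofScalarsSum_motzkin_eq {z : ℂ} (hz : ‖z‖ < 4⁻¹) :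
    ofScalarsSum (fun k ↦ (m k : ℂ)) z =
      1 + z ^ 2 * ofScalarsSum (fun k ↦ (m k : ℂ)) z ^ 2
        + z * ofScalarsSum (fun k ↦ (m k : ℂ)) z := by
  set c : ℕ → ℂ := fun k ↦ m k
  have hsum : Summable fun k ↦ ‖c k * z ^ k‖ := by
    simpa [c] using summable_motzkin_mul_pow hm0 hm1 hm (r := ‖z‖₊) (by exact_mod_cast hz)
  have hs : HasSum (fun k ↦ c k * z ^ k) (ofScalarsSum c z) := by
    simpa only [c, ofScalars_sum_eq, smul_eq_mul] using hsum.of_norm.hasSum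
  have := hs.eq_of_motzkin_recurrence
    (fun k ↦ by simp only [c]; exact_mod_cast motzkin_add_two hm k) hsum
  simp only [c, hm0, hm1, Nat.cast_one] at this
  linear_combination this

end Motzkin

/-- There is a holomorphic function `g` on a disc about `0` with `g(0) = 1` satisfying
`g(z) = 1 + z²g(z)² + zg(z)`, whose Taylor coefficients at `0` are the Motzkin numbers;
in particular the Motzkin generating series has positive radius of convergence. -/
theorem motzkin_generating_function_holomorphic
    (m : ℕ → ℕ) (hm0 : m 0 = 1) (hm1 : m 1 = 1)
    (hm : ∀ k, 2 ≤ k →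
      m k = (∑ p ∈ Finset.HasAntidiagonal.antidiagonal (k - 2), m p.1 * m p.2) + m (k - 1)) :
    (∃ r : ℝ, 0 < r ∧ ∃ g : ℂ → ℂ,
      DifferentiableOn ℂ g (Metric.ball 0 r) ∧ g 0 = 1 ∧
      (∀ z ∈ Metric.ball (0 : ℂ) r, g z = 1 + z ^ 2 * g z ^ 2 + z * g z) ∧
      (∀ k : ℕ, iteratedDeriv k g 0 / (Nat.factorial k : ℂ) = (m k : ℂ))) ∧
      ∃ r' : ℝ, 0 < r' ∧ Summable (fun k => (m k : ℝ) * r' ^ k) := by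
  have hg := hasFPowerSeriesOnBall_ofScalarsSum_motzkin hm0 hm1 hm
  refine ⟨⟨(4⁻¹ : ℝ≥0), by positivity, ofScalarsSum fun k ↦ (m k : ℂ), ?_, ?_, ?_, ?_⟩,
    (8⁻¹ : ℝ≥0), by positivity, summable_motzkin_mul_pow hm0 hm1 hm (by norm_num)⟩
  · simpa only [Metric.eball_coe] using hg.differentiableOn
  · simp [hm0]
  · exact fun z hz ↦ ofScalarsSum_motzkin_eq hm0 hm1 hm (by simpa using hz)
  · intro k
    have := hg.hasFPowerSeriesAt.eq_formalMultilinearSeries hg.analyticAt.hasFPowerSeriesAt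
    exact (congrFun (ofScalars_series_injective ℂ ℂ this) k).symm
end

section
/- Let r > 0, let (b_k) be a sequence of complex numbers, and let φ : [0,∞) → ℂ be continuous such that φ(t) = Σ_{k≥0} b_k·t^k for all 0 ≤ t < r (the series converging there), and such that ‖φ(t)‖ ≤ C·e^{K·t} for all t ≥ 0, for some constants C, K > 0. Then for every N ∈ ℕ there exists a constant C_N > 0 such that for all real ℏ with 0 < ℏ ≤ 1/(K+1): ‖∫_0^∞ φ(t)·e^{−t/ℏ} dt − Σ_{k=0}^{N−1} b_k·k!·ℏ^{k+1}‖ ≤ C_N·ℏ^{N+1}. -/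
/-!
Split `φ = P + R` with `P t = ∑_{k<N} b k t^k`. Since `∫₀^∞ t^k e^{-t/ℏ} dt = k! ℏ^{k+1}`,
the error is the Laplace transform of `R`. The Taylor estimate for the power series gives
`R t = O(t^N)` as `t → 0⁺`, and the exponential bounds on `φ` and on `P` give
`R t = O(e^{K t})` on `[0, ∞)`; together `‖R t‖ ≤ A t^N e^{K t}` for all `t ≥ 0`. The Laplace
transform of `R` is therefore at most `A N! / (1/ℏ - K)^{N+1}`, and `ℏ ≤ 1/(K+1)` makes
`1/ℏ - K ≥ 1/((K+1)ℏ)`.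
-/

open MeasureTheory

open Real Set Finset Filter Topology Asymptotics

lemma isBigO_sub_sum_range_of_hasSum {r : ℝ} (hr : 0 < r) {b : ℕ → ℂ} {φ : ℝ → ℂ}
    (hsum : ∀ t : ℝ, 0 ≤ t → t < r → HasSum (fun k => b k * (t : ℂ) ^ k) (φ t))
    (N : ℕ) :
    (fun t => φ t - ∑ k ∈ range N, b k * (t : ℂ) ^ k) =O[𝓝[≥] 0] fun t => t ^ N := by
  set p := FormalMultilinearSeries.ofScalars ℂ b
  have hsum_p : ∀ t : ℝ, 0 ≤ t → t < r → p.sum t = φ t := fun t ht htr => by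
    simpa [p, FormalMultilinearSeries.sum, FormalMultilinearSeries.ofScalars_apply_eq,
      mul_comm] using (hsum t ht htr).tsum_eq
  have hradius : 0 < p.radius := by
    let ρ : NNReal := ⟨r / 2, by positivity⟩
    have hρ : Tendsto (fun n => ‖p n‖ * (ρ : ℝ) ^ n) atTop (𝓝 0) := by
      simpa [p, FormalMultilinearSeries.ofScalars_norm] using
        (hsum ρ ρ.2 (show r / 2 < r by linarith)).summable.tendsto_atTop_zero.norm
    exact (ENNReal.coe_pos.2 (NNReal.coe_pos.1 (show (0 : ℝ) < ρ from half_pos hr))).trans_le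
      (p.le_radius_of_tendsto hρ)
  have hO := ((p.hasFPowerSeriesOnBall hradius).hasFPowerSeriesAt.isBigO_sub_partialSum_pow
    N).comp_tendsto (Complex.continuous_ofReal.tendsto' 0 0 Complex.ofReal_zero)
  refine (hO.mono nhdsWithin_le_nhds).congr' ?_ ?_
  · filter_upwards [Ico_mem_nhdsGE hr] with t ht
    simp [hsum_p t ht.1 ht.2, FormalMultilinearSeries.partialSum, p, mul_comm]
  · filter_upwards [self_mem_nhdsWithin] with t (ht : 0 ≤ t)
    simp [abs_of_nonneg ht]

lemma exists_norm_le_pow_mul_exp_of_isBigO {E : Type*} [NormedAddCommGroup E] {f : ℝ → E}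
    {N : ℕ} {B K : ℝ} (hK : 0 ≤ K) (hloc : f =O[𝓝[≥] 0] fun t => t ^ N)
    (hglob : ∀ t, 0 ≤ t → ‖f t‖ ≤ B * exp (K * t)) :
    ∃ A > 0, ∀ t, 0 ≤ t → ‖f t‖ ≤ A * t ^ N * exp (K * t) := by
  obtain ⟨c, hc, hcf⟩ := hloc.exists_pos
  obtain ⟨δ, hδ : 0 < δ, hδf⟩ :=
    (mem_nhdsGE_iff_exists_Ico_subset (a := (0 : ℝ))).1 hcf.bound
  have hB : 0 ≤ B := by simpa using (norm_nonneg _).trans (hglob 0 le_rfl)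
  refine ⟨max c (B / δ ^ N), lt_max_of_lt_left hc, fun t ht => ?_⟩
  rcases lt_or_ge t δ with htδ | htδ
  · calc ‖f t‖ ≤ c * t ^ N * 1 := by
          simpa [abs_of_nonneg ht] using hδf ⟨ht, htδ⟩
      _ ≤ max c (B / δ ^ N) * t ^ N * exp (K * t) := by
          gcongr
          · exact le_max_left _ _
          · exact one_le_exp (mul_nonneg hK ht)
  · calc ‖f t‖ ≤ B / δ ^ N * δ ^ N * exp (K * t) := by
          rw [div_mul_cancel₀ _ (pow_pos hδ N).ne']
          exact hglob t ht
      _ ≤ max c (B / δ ^ N) * t ^ N * exp (K * t) := by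
          gcongr
          exact le_max_right _ _

lemma pow_le_factorial_div_pow_mul_exp {K t : ℝ} (hK : 0 < K) (ht : 0 ≤ t) (k : ℕ) :
    t ^ k ≤ k.factorial / K ^ k * exp (K * t) := by
  have h := Real.pow_div_factorial_le_exp (x := K * t) (mul_nonneg hK.le ht) k
  rw [div_le_iff₀ (by positivity), mul_pow] at h
  rw [div_mul_eq_mul_div, le_div_iff₀ (by positivity)]
  linarith

lemma norm_sum_range_mul_pow_le_mul_exp (b : ℕ → ℂ) (N : ℕ) {K t : ℝ} (hK : 0 < K)
    (ht : 0 ≤ t) :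
    ‖∑ k ∈ range N, b k * (t : ℂ) ^ k‖
      ≤ (∑ k ∈ range N, ‖b k‖ * (k.factorial / K ^ k)) * exp (K * t) := by
  refine (norm_sum_le _ _).trans ?_
  rw [sum_mul]
  gcongr with k
  rw [norm_mul, norm_pow, Complex.norm_real, norm_of_nonneg ht, mul_assoc]
  gcongr
  exact pow_le_factorial_div_pow_mul_exp hK ht k

lemma integrableOn_Ici_pow_mul_exp_neg_mul {a : ℝ} (ha : 0 < a) (N : ℕ) :
    IntegrableOn (fun t => t ^ N * exp (-(a * t))) (Ici 0) := by
  refine (integrableOn_Ici_iff_integrableOn_Ioi).2 <|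
    (integrableOn_rpow_mul_exp_neg_mul_rpow (s := N) (p := 1)
      (neg_one_lt_zero.trans_le N.cast_nonneg) one_pos ha).congr_fun
      (fun t _ => ?_) measurableSet_Ioi
  simp [rpow_natCast]

lemma integral_Ici_pow_mul_exp_neg_mul {a : ℝ} (ha : 0 < a) (N : ℕ) :
    ∫ t in Ici 0, t ^ N * exp (-(a * t)) = N.factorial / a ^ (N + 1) := by
  have h := integral_rpow_mul_exp_neg_mul_Ioi (a := N + 1) (by positivity) ha
  simp only [add_sub_cancel_right, rpow_natCast] at h
  rw [integral_Ici_eq_integral_Ioi, h, Gamma_nat_eq_factorial, ← Nat.cast_add_one,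
    rpow_natCast, one_div, inv_pow, div_eq_inv_mul]

lemma cexp_neg_ofReal_div (t ℏ : ℝ) :
    Complex.exp (-(t : ℂ) / ℏ) = ((Real.exp (-(ℏ⁻¹ * t)) : ℝ) : ℂ) := by
  push_cast
  ring_nf

noncomputable def laplaceTransform (f : ℝ → ℂ) (ℏ : ℝ) : ℂ :=
  ∫ t in Ici 0, f t * Complex.exp (-(t : ℂ) / ℏ)

section Laplace

variable {f g : ℝ → ℂ} {A K ℏ : ℝ} {N : ℕ}

lemma norm_mul_cexp_neg_div_le (hf : ∀ t, 0 ≤ t → ‖f t‖ ≤ A * t ^ N * exp (K * t))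
    {t : ℝ} (ht : 0 ≤ t) :
    ‖f t * Complex.exp (-(t : ℂ) / ℏ)‖ ≤ A * (t ^ N * exp (-((ℏ⁻¹ - K) * t))) := by
  rw [norm_mul, cexp_neg_ofReal_div, Complex.norm_real, norm_of_nonneg (exp_pos _).le]
  calc ‖f t‖ * exp (-(ℏ⁻¹ * t)) ≤ A * t ^ N * exp (K * t) * exp (-(ℏ⁻¹ * t)) := by
        gcongr
        exact hf t ht
    _ = A * (t ^ N * exp (-((ℏ⁻¹ - K) * t))) := by
        rw [mul_assoc, ← exp_add]
        ring_nf

lemma integrableOn_mul_cexp_neg_div (hmeas : AEStronglyMeasurable f (volume.restrict (Ici 0)))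
    (hf : ∀ t, 0 ≤ t → ‖f t‖ ≤ A * t ^ N * exp (K * t)) (hKℏ : K < ℏ⁻¹) :
    IntegrableOn (fun t => f t * Complex.exp (-(t : ℂ) / ℏ)) (Ici 0) :=
  ((integrableOn_Ici_pow_mul_exp_neg_mul (sub_pos.2 hKℏ) N).const_mul A).mono'
    (hmeas.mul (by fun_prop : Continuous _).aestronglyMeasurable)
    (ae_restrict_of_forall_mem measurableSet_Ici fun _ ht => norm_mul_cexp_neg_div_le hf ht)

lemma norm_laplaceTransform_le (hf : ∀ t, 0 ≤ t → ‖f t‖ ≤ A * t ^ N * exp (K * t))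
    (hKℏ : K < ℏ⁻¹) :
    ‖laplaceTransform f ℏ‖ ≤ A * N.factorial / (ℏ⁻¹ - K) ^ (N + 1) := by
  refine (norm_integral_le_of_norm_le
    ((integrableOn_Ici_pow_mul_exp_neg_mul (sub_pos.2 hKℏ) N).const_mul A)
    (ae_restrict_of_forall_mem measurableSet_Ici fun _ ht =>
      norm_mul_cexp_neg_div_le hf ht)).trans_eq ?_
  rw [integral_const_mul, integral_Ici_pow_mul_exp_neg_mul (sub_pos.2 hKℏ), mul_div_assoc]

lemma laplaceTransform_sub
    (hf : IntegrableOn (fun t => f t * Complex.exp (-(t : ℂ) / ℏ)) (Ici 0))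
    (hg : IntegrableOn (fun t => g t * Complex.exp (-(t : ℂ) / ℏ)) (Ici 0)) :
    laplaceTransform f ℏ - laplaceTransform g ℏ
      = laplaceTransform (fun t => f t - g t) ℏ := by
  simp_rw [laplaceTransform, sub_mul]
  exact (integral_sub hf hg).symm

end Laplace

lemma integrableOn_ofReal_pow_mul_cexp_neg_div {ℏ : ℝ} (hℏ : 0 < ℏ) (k : ℕ) :
    IntegrableOn (fun t : ℝ => (t : ℂ) ^ k * Complex.exp (-(t : ℂ) / ℏ)) (Ici 0) :=
  integrableOn_mul_cexp_neg_div (A := 1) (K := 0) (N := k)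
    (by fun_prop : Continuous _).aestronglyMeasurable
    (fun t ht => by simp [abs_of_nonneg ht]) (inv_pos.2 hℏ)

lemma laplaceTransform_ofReal_pow {ℏ : ℝ} (hℏ : 0 < ℏ) (k : ℕ) :
    laplaceTransform (fun t => (t : ℂ) ^ k) ℏ = k.factorial * (ℏ : ℂ) ^ (k + 1) := by
  simp_rw [laplaceTransform, cexp_neg_ofReal_div, ← Complex.ofReal_pow, ← Complex.ofReal_mul]
  rw [integral_complex_ofReal, integral_Ici_pow_mul_exp_neg_mul (inv_pos.2 hℏ)]
  push_cast
  rw [inv_pow, div_inv_eq_mul]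

lemma integrableOn_sum_range_mul_pow_mul_cexp_neg_div (b : ℕ → ℂ) (N : ℕ) {ℏ : ℝ}
    (hℏ : 0 < ℏ) :
    IntegrableOn
      (fun t : ℝ => (∑ k ∈ range N, b k * (t : ℂ) ^ k) * Complex.exp (-(t : ℂ) / ℏ))
      (Ici 0) := by
  simp_rw [sum_mul, mul_assoc]
  exact integrable_finsetSum _ fun k _ =>
    (integrableOn_ofReal_pow_mul_cexp_neg_div hℏ k).const_mul (b k)

lemma laplaceTransform_sum_range_mul_pow (b : ℕ → ℂ) (N : ℕ) {ℏ : ℝ} (hℏ : 0 < ℏ) :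
    laplaceTransform (fun t => ∑ k ∈ range N, b k * (t : ℂ) ^ k) ℏ
      = ∑ k ∈ range N, b k * k.factorial * (ℏ : ℂ) ^ (k + 1) := by
  simp_rw [laplaceTransform, sum_mul, mul_assoc]
  rw [integral_finsetSum _ fun k _ =>
    (integrableOn_ofReal_pow_mul_cexp_neg_div hℏ k).const_mul (b k)]
  simp_rw [integral_const_mul]
  exact sum_congr rfl fun k _ => congrArg (b k * ·) (laplaceTransform_ofReal_pow hℏ k)

lemma inv_add_one_mul_le_inv_sub {K ℏ : ℝ} (hK : 0 ≤ K) (hℏ : 0 < ℏ) (hℏK : ℏ ≤ 1 / (K + 1)) :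
    ((K + 1) * ℏ)⁻¹ ≤ ℏ⁻¹ - K := by
  rw [le_div_iff₀ (by positivity), mul_comm] at hℏK
  rw [mul_inv, le_sub_iff_add_le]
  field_simp
  nlinarith

theorem laplace_transform_asymptotic_expansion_general
    (r C K : ℝ) (hr : 0 < r) (hK : 0 < K)
    (b : ℕ → ℂ) (φ : ℝ → ℂ) (hφc : ContinuousOn φ (Set.Ici 0))
    (hsum : ∀ t : ℝ, 0 ≤ t → t < r → HasSum (fun k => b k * (t : ℂ) ^ k) (φ t))
    (hφb : ∀ t : ℝ, 0 ≤ t → ‖φ t‖ ≤ C * Real.exp (K * t)) :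
    ∀ N : ℕ, ∃ CN : ℝ, 0 < CN ∧
      ∀ ℏ : ℝ, 0 < ℏ → ℏ ≤ 1 / (K + 1) →
        ‖(∫ t in Set.Ici (0 : ℝ), φ t * Complex.exp (-(t : ℂ) / (ℏ : ℂ)))
            - ∑ k ∈ Finset.range N, b k * (Nat.factorial k : ℂ) * (ℏ : ℂ) ^ (k + 1)‖
          ≤ CN * ℏ ^ (N + 1) := by
  intro N
  have hglob (t : ℝ) (ht : 0 ≤ t) : ‖φ t - ∑ k ∈ range N, b k * (t : ℂ) ^ k‖
      ≤ (C + ∑ k ∈ range N, ‖b k‖ * (k.factorial / K ^ k)) * exp (K * t) := by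
    rw [add_mul]
    exact (norm_sub_le _ _).trans
      (add_le_add (hφb t ht) (norm_sum_range_mul_pow_le_mul_exp b N hK ht))
  obtain ⟨A, hA, hR⟩ :=
    exists_norm_le_pow_mul_exp_of_isBigO hK.le (isBigO_sub_sum_range_of_hasSum hr hsum N) hglob
  refine ⟨A * N.factorial * (K + 1) ^ (N + 1), by positivity, fun ℏ hℏ hℏK => ?_⟩
  have hgap := inv_add_one_mul_le_inv_sub hK.le hℏ hℏK
  have hKℏ : K < ℏ⁻¹ := by
    linarith [inv_pos.2 (mul_pos (by linarith : 0 < K + 1) hℏ)]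
  have hφint : IntegrableOn (fun t => φ t * Complex.exp (-(t : ℂ) / ℏ)) (Ici 0) :=
    integrableOn_mul_cexp_neg_div (A := C) (N := 0)
      (hφc.aestronglyMeasurable measurableSet_Ici) (by simpa using hφb) hKℏ
  change ‖laplaceTransform φ ℏ - _‖ ≤ _
  rw [← laplaceTransform_sum_range_mul_pow b N hℏ,
    laplaceTransform_sub hφint (integrableOn_sum_range_mul_pow_mul_cexp_neg_div b N hℏ)]
  calc _ ≤ A * N.factorial / (ℏ⁻¹ - K) ^ (N + 1) := norm_laplaceTransform_le hR hKℏ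
    _ ≤ A * N.factorial / ((K + 1) * ℏ)⁻¹ ^ (N + 1) := by gcongr
    _ = A * N.factorial * (K + 1) ^ (N + 1) * ℏ ^ (N + 1) := by
      rw [inv_pow, div_inv_eq_mul, mul_pow]
      ring

/-- Asymptotic expansion of the Laplace transform: if `φ : [0,∞) → ℂ` is continuous,
exponentially bounded, and equals a convergent power series `Σ b_k t^k` on `[0,r)`,
then for each `N` the Laplace transform `∫₀^∞ φ(t)e^{−t/ℏ}dt` differs from the partial
sum `Σ_{k<N} b_k·k!·ℏ^{k+1}` by `O(ℏ^{N+1})` as `ℏ → 0⁺`. -/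
theorem laplace_transform_asymptotic_expansion
    (r C K : ℝ) (hr : 0 < r) (hC : 0 < C) (hK : 0 < K)
    (b : ℕ → ℂ) (φ : ℝ → ℂ) (hφc : ContinuousOn φ (Set.Ici 0))
    (hsum : ∀ t : ℝ, 0 ≤ t → t < r → HasSum (fun k => b k * (t : ℂ) ^ k) (φ t))
    (hφb : ∀ t : ℝ, 0 ≤ t → ‖φ t‖ ≤ C * Real.exp (K * t)) :
    ∀ N : ℕ, ∃ CN : ℝ, 0 < CN ∧
      ∀ ℏ : ℝ, 0 < ℏ → ℏ ≤ 1 / (K + 1) →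
        ‖(∫ t in Set.Ici (0 : ℝ), φ t * Complex.exp (-(t : ℂ) / (ℏ : ℂ)))
            - ∑ k ∈ Finset.range N, b k * (Nat.factorial k : ℂ) * (ℏ : ℂ) ^ (k + 1)‖
          ≤ CN * ℏ ^ (N + 1) :=
  laplace_transform_asymptotic_expansion_general r C K hr hK b φ hφc hsum hφb
end

section
/- Consider the recursive Volterra system: fix real constants C ≥ 1 and L ≥ 0, a constant c ∈ ℂ with ‖c‖ ≤ C, and continuous functions w, ω : [0,∞) → ℂ with ‖w(τ)‖ ≤ C and ‖ω(τ)‖ ≤ C·e^{L·τ} for all τ ≥ 0; define continuous functions φ_k : [0,∞) → ℂ by φ_0(τ) = c, φ_1(τ) = ∫_0^τ (w(r)·φ_0(r) + ω(r)) dr, and for k ≥ 2, φ_k(τ) = ∫_0^τ (Σ_{i+j=k−2} (φ_i ∗ φ_j)(r) + w(r)·φ_{k−1}(r)) dr. Define real numbers M_k by M_0 = C, M_1 = C·(C+1), and M_k = Σ_{i+j=k−2} M_i·M_j + C·M_{k−1} for k ≥ 2. Then for every k ≥ 0 and every τ ≥ 0: ‖φ_k(τ)‖ ≤ M_k·(τ^k/k!)·e^{L·τ}.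 -/
/-!
Induction on `k`. The majorants `τ ^ k / k! * exp (L τ)` are stable under both operations of the
system: the convolution of the `i`-th and `j`-th majorant is exactly the `(i + j + 1)`-st one (the
exponentials multiply to `exp (L τ)` and the polynomial parts give a beta integral), and since
`L ≥ 0` integrating the `k`-th majorant from `0` gives at most the `(k + 1)`-st. The recursion
defining `M k` is precisely the recursion satisfied by the resulting coefficients.
-/

open intervalIntegral MeasureTheory Real

section

open Nat Finset

theorem hasDerivAt_pow_succ_div_factorial (k : ℕ) (t : ℝ) :
    HasDerivAt (fun s : ℝ => s ^ (k + 1) / (k + 1)!) (t ^ k / k !) t := by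
  refine ((hasDerivAt_pow (k + 1) t).div_const ((k + 1)! : ℝ)).congr_deriv ?_
  rw [factorial_succ, cast_mul]
  field_simp
  push_cast
  ring

theorem integral_pow_div_factorial (k : ℕ) (x : ℝ) :
    ∫ t in (0 : ℝ)..x, t ^ k / k ! = x ^ (k + 1) / (k + 1)! := by
  rw [integral_eq_sub_of_hasDerivAt (fun t _ => hasDerivAt_pow_succ_div_factorial k t)
    ((by fun_prop : Continuous fun t : ℝ => t ^ k / k !).intervalIntegrable _ _)]
  simp

theorem integral_pow_div_factorial_mul_sub_pow_div_factorial (i j : ℕ) (x : ℝ) :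
    ∫ s in (0 : ℝ)..x, s ^ i / i ! * ((x - s) ^ j / j !) = x ^ (i + j + 1) / (i + j + 1)! := by
  induction j generalizing i with
  | zero => simpa using integral_pow_div_factorial i x
  | succ j ih =>
    have hu : ∀ s ∈ Set.uIcc 0 x, HasDerivAt (fun s => (x - s) ^ (j + 1) / (j + 1)!)
        (-((x - s) ^ j / j !)) s := fun s _ => by
      simpa [Function.comp_def] using (hasDerivAt_pow_succ_div_factorial j (x - s)).comp s
        ((hasDerivAt_id s).const_sub x)
    have ibp := intervalIntegral.integral_mul_deriv_eq_deriv_mul hu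
      (fun s _ => hasDerivAt_pow_succ_div_factorial i s)
      ((by fun_prop : Continuous fun s : ℝ => -((x - s) ^ j / j !)).intervalIntegrable _ _)
      ((by fun_prop : Continuous fun s : ℝ => s ^ i / i !).intervalIntegrable _ _)
    simp only [sub_self, zero_pow (succ_ne_zero _), zero_div, zero_mul, mul_zero, sub_zero,
      neg_mul, intervalIntegral.integral_neg, sub_neg_eq_add, zero_add] at ibp
    simp_rw [mul_comm (_ ^ i / _)]
    rw [ibp]
    simp_rw [mul_comm ((x - _) ^ j / _)]
    rw [ih (i + 1)]
    ring_nf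

theorem norm_integral_le_of_norm_le_pow_mul_exp {E : Type*} [NormedAddCommGroup E]
    [NormedSpace ℝ E] {F : ℝ → E} {K L τ : ℝ} {k : ℕ} (hL : 0 ≤ L) (hτ : 0 ≤ τ)
    (hF : ∀ t ∈ Set.Ioc 0 τ, ‖F t‖ ≤ K * (t ^ k / k !) * exp (L * t)) :
    ‖∫ t in (0 : ℝ)..τ, F t‖ ≤ K * (τ ^ (k + 1) / (k + 1)!) * exp (L * τ) := by
  have hF' : ∀ t ∈ Set.Ioc 0 τ, ‖F t‖ ≤ K * exp (L * τ) * (t ^ k / k !) := fun t ht => by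
    have hbound := hF t ht
    have hK : 0 ≤ K * (t ^ k / k !) :=
      (mul_nonneg_iff_of_pos_right (exp_pos _)).1 ((norm_nonneg _).trans hbound)
    have hexp : exp (L * t) ≤ exp (L * τ) := exp_le_exp.2 (mul_le_mul_of_nonneg_left ht.2 hL)
    calc ‖F t‖ ≤ K * (t ^ k / k !) * exp (L * τ) :=
          hbound.trans (mul_le_mul_of_nonneg_left hexp hK)
      _ = K * exp (L * τ) * (t ^ k / k !) := by ring
  calc ‖∫ t in (0 : ℝ)..τ, F t‖ ≤ ∫ t in (0 : ℝ)..τ, K * exp (L * τ) * (t ^ k / k !) :=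
        norm_integral_le_of_norm_le hτ (ae_of_all _ hF')
          ((by fun_prop : Continuous fun t : ℝ =>
            K * exp (L * τ) * (t ^ k / k !)).intervalIntegrable _ _)
    _ = K * (τ ^ (k + 1) / (k + 1)!) * exp (L * τ) := by
        rw [intervalIntegral.integral_const_mul, integral_pow_div_factorial]
        ring

theorem norm_integral_mul_sub_le {E : Type*} [NormedRing E] [NormedSpace ℝ E] {f g : ℝ → E}
    {a b L x : ℝ} {i j : ℕ} (hx : 0 ≤ x)
    (hf : ∀ t, 0 ≤ t → ‖f t‖ ≤ a * (t ^ i / i !) * exp (L * t))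
    (hg : ∀ t, 0 ≤ t → ‖g t‖ ≤ b * (t ^ j / j !) * exp (L * t)) :
    ‖∫ s in (0 : ℝ)..x, f s * g (x - s)‖
      ≤ a * b * (x ^ (i + j + 1) / (i + j + 1)!) * exp (L * x) := by
  have hbound : ∀ s ∈ Set.Ioc 0 x,
      ‖f s * g (x - s)‖ ≤ a * b * exp (L * x) * (s ^ i / i ! * ((x - s) ^ j / j !)) :=
    fun s hs => by
      have hfs := hf s hs.1.le
      calc ‖f s * g (x - s)‖ ≤ ‖f s‖ * ‖g (x - s)‖ := norm_mul_le _ _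
        _ ≤ a * (s ^ i / i !) * exp (L * s) * (b * ((x - s) ^ j / j !) * exp (L * (x - s))) :=
          mul_le_mul hfs (hg _ (sub_nonneg.2 hs.2)) (norm_nonneg _) ((norm_nonneg _).trans hfs)
        _ = a * b * exp (L * x) * (s ^ i / i ! * ((x - s) ^ j / j !)) := by
          rw [show L * x = L * s + L * (x - s) by ring, exp_add]
          ring
  calc ‖∫ s in (0 : ℝ)..x, f s * g (x - s)‖
      ≤ ∫ s in (0 : ℝ)..x, a * b * exp (L * x) * (s ^ i / i ! * ((x - s) ^ j / j !)) :=
        norm_integral_le_of_norm_le hx (ae_of_all _ hbound)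
          ((by fun_prop : Continuous fun s : ℝ =>
            a * b * exp (L * x) * (s ^ i / i ! * ((x - s) ^ j / j !))).intervalIntegrable _ _)
    _ = a * b * (x ^ (i + j + 1) / (i + j + 1)!) * exp (L * x) := by
        rw [intervalIntegral.integral_const_mul,
          integral_pow_div_factorial_mul_sub_pow_div_factorial]
        ring

theorem norm_sum_conv_add_mul_le {E : Type*} [NormedRing E] [NormedSpace ℝ E]
    {w : ℝ → E} {f : ℕ → ℝ → E} {M : ℕ → ℝ} {C L x : ℝ} {n : ℕ} (hx : 0 ≤ x) (hw : ‖w x‖ ≤ C)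
    (hf : ∀ i ≤ n + 1, ∀ t, 0 ≤ t → ‖f i t‖ ≤ M i * (t ^ i / i !) * exp (L * t)) :
    ‖(∑ p ∈ antidiagonal n, ∫ s in (0 : ℝ)..x, f p.1 s * f p.2 (x - s))
        + w x * f (n + 1) x‖
      ≤ ((∑ p ∈ antidiagonal n, M p.1 * M p.2) + C * M (n + 1))
          * (x ^ (n + 1) / (n + 1)!) * exp (L * x) := by
  have hconv : ∀ p ∈ antidiagonal n, ‖∫ s in (0 : ℝ)..x, f p.1 s * f p.2 (x - s)‖
      ≤ M p.1 * M p.2 * (x ^ (n + 1) / (n + 1)!) * exp (L * x) := fun p hp => by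
    obtain rfl := mem_antidiagonal.1 hp
    exact norm_integral_mul_sub_le hx (hf p.1 (by omega)) (hf p.2 (by omega))
  have hlin : ‖w x * f (n + 1) x‖ ≤ C * (M (n + 1) * (x ^ (n + 1) / (n + 1)!) * exp (L * x)) :=
    (norm_mul_le _ _).trans (mul_le_mul hw (hf _ le_rfl x hx) (norm_nonneg _)
      ((norm_nonneg _).trans hw))
  calc _ ≤ (∑ p ∈ antidiagonal n, M p.1 * M p.2 * (x ^ (n + 1) / (n + 1)!) * exp (L * x))
        + C * (M (n + 1) * (x ^ (n + 1) / (n + 1)!) * exp (L * x)) :=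
      norm_add_le_of_le ((norm_sum_le _ _).trans (sum_le_sum hconv)) hlin
    _ = _ := by rw [add_mul, add_mul, sum_mul, sum_mul]; ring

end

theorem volterra_system_inductive_bounds_general
    (C L : ℝ) (hC : 1 ≤ C) (hL : 0 ≤ L)
    (c : ℂ) (hc : ‖c‖ ≤ C)
    (w ω : ℝ → ℂ)
    (hwb : ∀ τ : ℝ, 0 ≤ τ → ‖w τ‖ ≤ C)
    (hωb : ∀ τ : ℝ, 0 ≤ τ → ‖ω τ‖ ≤ C * Real.exp (L * τ))
    (φ : ℕ → ℝ → ℂ)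
    (hφ0 : ∀ τ : ℝ, φ 0 τ = c)
    (hφ1 : ∀ τ : ℝ, φ 1 τ = ∫ x in (0 : ℝ)..τ, (w x * φ 0 x + ω x))
    (hφk : ∀ k, 2 ≤ k → ∀ τ : ℝ, φ k τ
      = ∫ x in (0 : ℝ)..τ,
          ((∑ p ∈ Finset.HasAntidiagonal.antidiagonal (k - 2),
              ∫ s in (0 : ℝ)..x, φ p.1 s * φ p.2 (x - s))
            + w x * φ (k - 1) x))
    (M : ℕ → ℝ) (hM0 : M 0 = C) (hM1 : M 1 = C * (C + 1))
    (hMk : ∀ k, 2 ≤ k →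
      M k = (∑ p ∈ Finset.HasAntidiagonal.antidiagonal (k - 2), M p.1 * M p.2) + C * M (k - 1)) :
    ∀ k : ℕ, ∀ τ : ℝ, 0 ≤ τ →
      ‖φ k τ‖ ≤ M k * (τ ^ k / (Nat.factorial k : ℝ)) * Real.exp (L * τ) := by
  intro k
  induction k using Nat.strong_induction_on with
  | _ k ih =>
  intro τ hτ
  rcases k with _ | _ | n
  · have hexp := one_le_exp (mul_nonneg hL hτ)
    simp only [hφ0, hM0, pow_zero, Nat.factorial_zero, Nat.cast_one, div_one, mul_one]
    nlinarith
  · rw [hφ1, hM1]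
    refine norm_integral_le_of_norm_le_pow_mul_exp hL hτ fun t ht => ?_
    have hexp := one_le_exp (mul_nonneg hL ht.1.le)
    have hwφ : ‖w t * φ 0 t‖ ≤ C * C := by
      rw [norm_mul, hφ0]
      exact mul_le_mul (hwb t ht.1.le) hc (norm_nonneg _) (by linarith)
    calc ‖w t * φ 0 t + ω t‖ ≤ C * C + C * exp (L * t) := norm_add_le_of_le hwφ (hωb t ht.1.le)
      _ ≤ C * (C + 1) * (t ^ 0 / (Nat.factorial 0 : ℝ)) * exp (L * t) := by
        simp only [pow_zero, Nat.factorial_zero, Nat.cast_one, div_one, mul_one]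
        nlinarith
  · rw [hφk (n + 2) (by omega), hMk (n + 2) (by omega)]
    exact norm_integral_le_of_norm_le_pow_mul_exp hL hτ fun t ht =>
      norm_sum_conv_add_mul_le ht.1.le (hwb t ht.1.le) fun i hi => ih i (by omega)

/-- Inductive bounds for the recursive Volterra system of successive approximations:
with data bounded by `C ≥ 1` and `L ≥ 0`, the terms `φ_k` of the recursive system
satisfy `‖φ_k(τ)‖ ≤ M_k·(τ^k/k!)·e^{Lτ}`, where `M_0 = C`, `M_1 = C(C+1)` and
`M_k = Σ_{i+j=k−2} M_i M_j + C·M_{k−1}` for `k ≥ 2`. -/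
theorem volterra_system_inductive_bounds
    (C L : ℝ) (hC : 1 ≤ C) (hL : 0 ≤ L)
    (c : ℂ) (hc : ‖c‖ ≤ C)
    (w ω : ℝ → ℂ)
    (hwc : ContinuousOn w (Set.Ici 0)) (hωc : ContinuousOn ω (Set.Ici 0))
    (hwb : ∀ τ : ℝ, 0 ≤ τ → ‖w τ‖ ≤ C)
    (hωb : ∀ τ : ℝ, 0 ≤ τ → ‖ω τ‖ ≤ C * Real.exp (L * τ))
    (φ : ℕ → ℝ → ℂ) (hφc : ∀ k, ContinuousOn (φ k) (Set.Ici 0))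
    (hφ0 : ∀ τ : ℝ, φ 0 τ = c)
    (hφ1 : ∀ τ : ℝ, φ 1 τ = ∫ x in (0 : ℝ)..τ, (w x * φ 0 x + ω x))
    (hφk : ∀ k, 2 ≤ k → ∀ τ : ℝ, φ k τ
      = ∫ x in (0 : ℝ)..τ,
          ((∑ p ∈ Finset.HasAntidiagonal.antidiagonal (k - 2),
              ∫ s in (0 : ℝ)..x, φ p.1 s * φ p.2 (x - s))
            + w x * φ (k - 1) x))
    (M : ℕ → ℝ) (hM0 : M 0 = C) (hM1 : M 1 = C * (C + 1))
    (hMk : ∀ k, 2 ≤ k →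
      M k = (∑ p ∈ Finset.HasAntidiagonal.antidiagonal (k - 2), M p.1 * M p.2) + C * M (k - 1)) :
    ∀ k : ℕ, ∀ τ : ℝ, 0 ≤ τ →
      ‖φ k τ‖ ≤ M k * (τ ^ k / (Nat.factorial k : ℝ)) * Real.exp (L * τ) :=
  volterra_system_inductive_bounds_general C L hC hL c hc w ω hwb hωb φ hφ0 hφ1 hφk M hM0 hM1 hMk
end

section
/- Consider the recursive Volterra system: fix real constants C ≥ 1 and L ≥ 0, a constant c ∈ ℂ with ‖c‖ ≤ C, and continuous functions w, ω : [0,∞) → ℂ with ‖w(τ)‖ ≤ C and ‖ω(τ)‖ ≤ C·e^{L·τ} for all τ ≥ 0; define continuous functions φ_k : [0,∞) → ℂ by φ_0(τ) = c, φ_1(τ) = ∫_0^τ (w(r)·φ_0(r) + ω(r)) dr, and for k ≥ 2, φ_k(τ) = ∫_0^τ (Σ_{i+j=k−2} (φ_i ∗ φ_j)(r) + w(r)·φ_{k−1}(r)) dr. Assume in addition that there exist constants C', M > 0 with ‖φ_k(τ)‖ ≤ C'·M^k·(τ^k/k!)·e^{L·τ} for all k ≥ 0 and τ ≥ 0. Then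 φ(τ) := Σ_{k=0}^∞ φ_k(τ) defines a continuous function φ : [0,∞) → ℂ which satisfies the nonlinear Volterra convolution equation φ(τ) = c + ∫_0^τ ((φ ∗ φ)(r) + w(r)·φ(r) + ω(r)) dr for all τ ≥ 0. -/
/-!
On `[0, T]` the hypothesis gives `‖φₖ‖ ≤ K aᵏ / k!` with `K = C' e^{LT}` and `a = M T`, so `∑ φₖ`
converges uniformly there and `Φ` is continuous. Since `∑_{i+j=n} aⁱ/i! · aʲ/j! = (2a)ⁿ/n!`, the
Cauchy coefficients `∑_{i+j=n} φᵢ(s) φⱼ(x - s)` obey a bound of the same kind, so by dominated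
convergence `Φ ∗ Φ = ∑ₙ ∑_{i+j=n} φᵢ ∗ φⱼ`, and the recursion for `φ_{n+2}` can be summed under the
integral sign: `∑ₙ φ_{n+2}(τ) = ∫₀^τ (Φ ∗ Φ + w (Φ - c))`. Adding `φ₀ + φ₁` gives the equation.
-/

open MeasureTheory Set
open Finset.HasAntidiagonal (antidiagonal)
open scoped Interval

section Factorial

open scoped Nat

theorem sum_antidiagonal_pow_div_factorial_mul {𝕜 : Type*} [Field 𝕜] [CharZero 𝕜]
    (a b : 𝕜) (n : ℕ) :
    ∑ p ∈ antidiagonal n, a ^ p.1 / p.1 ! * (b ^ p.2 / p.2 !) = (a + b) ^ n / n ! := by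
  rw [(Commute.all a b).add_pow', Finset.sum_div]
  refine Finset.sum_congr rfl fun p hp => ?_
  obtain rfl := Finset.HasAntidiagonal.mem_antidiagonal.1 hp
  rw [nsmul_eq_mul, Nat.cast_add_choose]
  field_simp [Nat.factorial_ne_zero]

theorem norm_le_mul_pow_div_factorial_of_le_exp {E : Type*} [Norm E] {f : ℕ → ℝ → E}
    {C M L : ℝ} (hC : 0 ≤ C) (hM : 0 ≤ M) (hL : 0 ≤ L)
    (hf : ∀ k x, 0 ≤ x → ‖f k x‖ ≤ C * M ^ k * (x ^ k / k !) * Real.exp (L * x)) (T : ℝ) :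
    ∀ k, ∀ x ∈ Icc 0 T, ‖f k x‖ ≤ C * Real.exp (L * T) * ((M * T) ^ k / k !) := by
  rintro k x ⟨hx, hxT⟩
  have hT : 0 ≤ T := hx.trans hxT
  calc ‖f k x‖ ≤ C * M ^ k * (x ^ k / k !) * Real.exp (L * x) := hf k x hx
    _ ≤ C * M ^ k * (T ^ k / k !) * Real.exp (L * T) := by gcongr
    _ = C * Real.exp (L * T) * ((M * T) ^ k / k !) := by ring

end Factorial

theorem hasSum_intervalIntegral_of_norm_le {ι E : Type*} [Countable ι] [NormedAddCommGroup E]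
    [NormedSpace ℝ E] {F : ι → ℝ → E} {f : ℝ → E} {u : ι → ℝ} {a b : ℝ}
    (hF : ∀ i, IntervalIntegrable (F i) volume a b) (hu : Summable u)
    (hFu : ∀ i, ∀ t ∈ Ι a b, ‖F i t‖ ≤ u i) (hFf : ∀ t ∈ Ι a b, HasSum (fun i => F i t) (f t)) :
    HasSum (fun i => ∫ t in a..b, F i t) (∫ t in a..b, f t) :=
  intervalIntegral.hasSum_integral_of_dominated_convergence (fun i _ => u i)
    (fun i => (hF i).def'.aestronglyMeasurable) (fun i => .of_forall (hFu i))
    (.of_forall fun _ _ => hu) intervalIntegrable_const (.of_forall hFf)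

theorem continuousOn_Ici_tsum {α E : Type*} [NormedAddCommGroup E] [CompleteSpace E]
    {f : α → ℝ → E} (hf : ∀ i, ContinuousOn (f i) (Ici 0))
    (hbound : ∀ T, ∃ u : α → ℝ, Summable u ∧ ∀ i, ∀ x ∈ Icc 0 T, ‖f i x‖ ≤ u i) :
    ContinuousOn (fun x => ∑' i, f i x) (Ici 0) := by
  intro τ hτ
  obtain ⟨u, hu, hfu⟩ := hbound (τ + 1)
  have hcont := continuousOn_tsum (fun i => (hf i).mono Icc_subset_Ici_self) hu hfu
  refine (hcont τ ⟨hτ, by linarith⟩).mono_of_mem_nhdsWithin ?_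
  exact mem_nhdsWithin.2 ⟨Iio (τ + 1), isOpen_Iio, lt_add_one τ, fun x hx => ⟨hx.2, hx.1.le⟩⟩

noncomputable section LaplaceConvolution

variable {R : Type*} [NormedRing R] {f g : ℝ → R}

theorem continuousOn_Icc_mul_comp_sub (hf : ContinuousOn f (Ici 0)) (hg : ContinuousOn g (Ici 0))
    (x : ℝ) : ContinuousOn (fun s => f s * g (x - s)) (Icc 0 x) :=
  (hf.mono Icc_subset_Ici_self).mul <|
    hg.comp (continuous_const.sub continuous_id).continuousOn fun _ hs => sub_nonneg.2 hs.2

theorem intervalIntegrable_mul_comp_sub (hf : ContinuousOn f (Ici 0))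
    (hg : ContinuousOn g (Ici 0)) {x : ℝ} (hx : 0 ≤ x) :
    IntervalIntegrable (fun s => f s * g (x - s)) volume 0 x :=
  (continuousOn_Icc_mul_comp_sub hf hg x).intervalIntegrable_of_Icc hx

variable [NormedAlgebra ℝ R]

def laplaceConv (f g : ℝ → R) (x : ℝ) : R := ∫ s in (0 : ℝ)..x, f s * g (x - s)

def convSqCoeff (f : ℕ → ℝ → R) (n : ℕ) (x : ℝ) : R :=
  ∑ p ∈ antidiagonal n, laplaceConv (f p.1) (f p.2) x

theorem continuousOn_laplaceConv (hf : ContinuousOn f (Ici 0)) (hg : ContinuousOn g (Ici 0)) :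
    ContinuousOn (laplaceConv f g) (Ici 0) := by
  -- `f` and `g` are only continuous on `[0, ∞)`: extend them constantly to the left first.
  have hext : ∀ {h : ℝ → R}, ContinuousOn h (Ici 0) → Continuous fun s => h (max s 0) :=
    fun hh => hh.comp_continuous (continuous_id.max continuous_const) fun _ =>
      mem_Ici.2 (le_max_right _ _)
  have hcont : Continuous fun x => ∫ s in (0 : ℝ)..x, f (max s 0) * g (max (x - s) 0) :=
    intervalIntegral.continuous_parametric_intervalIntegral_of_continuous
      (((hext hf).comp continuous_snd).mul ((hext hg).comp (continuous_fst.sub continuous_snd)))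
      continuous_id
  refine hcont.continuousOn.congr fun x hx => intervalIntegral.integral_congr fun s hs => ?_
  rw [uIcc_of_le (show (0 : ℝ) ≤ x from hx)] at hs
  simp only [max_eq_left hs.1, max_eq_left (sub_nonneg.2 hs.2)]

end LaplaceConvolution

section FactorialBound

open scoped Nat

variable {R : Type*} [NormedRing R] {f : ℕ → ℝ → R} {T K a : ℝ}

theorem summable_norm_of_factorial_bound (hf : ∀ k, ∀ x ∈ Icc 0 T, ‖f k x‖ ≤ K * (a ^ k / k !))
    {x : ℝ} (hx : x ∈ Icc 0 T) : Summable fun k => ‖f k x‖ :=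
  .of_nonneg_of_le (fun _ => norm_nonneg _) (fun k => hf k x hx)
    ((Real.summable_pow_div_factorial a).mul_left K)

theorem norm_sum_antidiagonal_mul_le (hf : ∀ k, ∀ x ∈ Icc 0 T, ‖f k x‖ ≤ K * (a ^ k / k !))
    {s x : ℝ} (hs : 0 ≤ s) (hsx : s ≤ x) (hxT : x ≤ T) (n : ℕ) :
    ‖∑ p ∈ antidiagonal n, f p.1 s * f p.2 (x - s)‖ ≤ K ^ 2 * ((2 * a) ^ n / n !) := by
  have hs' : s ∈ Icc 0 T := ⟨hs, hsx.trans hxT⟩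
  have hxs' : x - s ∈ Icc 0 T := ⟨sub_nonneg.2 hsx, by linarith⟩
  calc ‖∑ p ∈ antidiagonal n, f p.1 s * f p.2 (x - s)‖
      ≤ ∑ p ∈ antidiagonal n, ‖f p.1 s‖ * ‖f p.2 (x - s)‖ :=
        (norm_sum_le _ _).trans (Finset.sum_le_sum fun _ _ => norm_mul_le _ _)
    _ ≤ ∑ p ∈ antidiagonal n, K * (a ^ p.1 / p.1 !) * (K * (a ^ p.2 / p.2 !)) :=
        Finset.sum_le_sum fun p _ => mul_le_mul (hf _ s hs') (hf _ _ hxs') (norm_nonneg _)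
          ((norm_nonneg _).trans (hf _ s hs'))
    _ = K ^ 2 * ((2 * a) ^ n / n !) := by
        simp_rw [mul_mul_mul_comm K, ← Finset.mul_sum, sum_antidiagonal_pow_div_factorial_mul,
          two_mul, sq]

variable [NormedAlgebra ℝ R]

theorem continuousOn_convSqCoeff (hfc : ∀ k, ContinuousOn (f k) (Ici 0)) (n : ℕ) :
    ContinuousOn (convSqCoeff f n) (Ici 0) :=
  continuousOn_finsetSum _ fun p _ => continuousOn_laplaceConv (hfc p.1) (hfc p.2)

theorem convSqCoeff_eq_integral_sum (hfc : ∀ k, ContinuousOn (f k) (Ici 0)) (n : ℕ) {x : ℝ}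
    (hx : 0 ≤ x) :
    convSqCoeff f n x = ∫ s in (0 : ℝ)..x, ∑ p ∈ antidiagonal n, f p.1 s * f p.2 (x - s) :=
  (intervalIntegral.integral_finsetSum fun p _ =>
    intervalIntegrable_mul_comp_sub (hfc p.1) (hfc p.2) hx).symm

theorem norm_convSqCoeff_le (hf : ∀ k, ∀ x ∈ Icc 0 T, ‖f k x‖ ≤ K * (a ^ k / k !)) (ha : 0 ≤ a)
    (hfc : ∀ k, ContinuousOn (f k) (Ici 0)) {x : ℝ} (hx : x ∈ Icc 0 T) (n : ℕ) :
    ‖convSqCoeff f n x‖ ≤ T * (K ^ 2 * ((2 * a) ^ n / n !)) := by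
  rw [convSqCoeff_eq_integral_sum hfc n hx.1]
  calc _ ≤ K ^ 2 * ((2 * a) ^ n / n !) * |x - 0| :=
        intervalIntegral.norm_integral_le_of_norm_le_const fun s hs => by
          rw [uIoc_of_le hx.1] at hs
          exact norm_sum_antidiagonal_mul_le hf hs.1.le hs.2 hx.2 n
    _ ≤ T * (K ^ 2 * ((2 * a) ^ n / n !)) := by
        rw [sub_zero, abs_of_nonneg hx.1, mul_comm]
        gcongr
        exact hx.2

variable [CompleteSpace R] {F : ℝ → R}

theorem hasSum_convSqCoeff (hf : ∀ k, ∀ x ∈ Icc 0 T, ‖f k x‖ ≤ K * (a ^ k / k !))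
    (hfc : ∀ k, ContinuousOn (f k) (Ici 0)) (hF : ∀ x ∈ Icc 0 T, HasSum (f · x) (F x))
    {x : ℝ} (hx : x ∈ Icc 0 T) : HasSum (fun n => convSqCoeff f n x) (laplaceConv F F x) := by
  simp_rw [convSqCoeff_eq_integral_sum hfc _ hx.1]
  refine hasSum_intervalIntegral_of_norm_le (u := fun n => K ^ 2 * ((2 * a) ^ n / n !))
    (fun n => ((continuousOn_finsetSum _ fun p _ =>
      continuousOn_Icc_mul_comp_sub (hfc p.1) (hfc p.2) x)).intervalIntegrable_of_Icc hx.1)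
    ((Real.summable_pow_div_factorial _).mul_left _)
    (fun n s hs => ?_) (fun s hs => ?_) <;> rw [uIoc_of_le hx.1] at hs
  · exact norm_sum_antidiagonal_mul_le hf hs.1.le hs.2 hx.2 n
  · have hs' : s ∈ Icc 0 T := ⟨hs.1.le, hs.2.trans hx.2⟩
    have hxs' : x - s ∈ Icc 0 T := ⟨sub_nonneg.2 hs.2, by linarith [hs.1, hx.2]⟩
    have hf₁ := summable_norm_of_factorial_bound hf hs'
    have hf₂ := summable_norm_of_factorial_bound hf hxs'
    rw [← (hF s hs').tsum_eq, ← (hF _ hxs').tsum_eq,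
      tsum_mul_tsum_eq_tsum_sum_antidiagonal_of_summable_norm hf₁ hf₂]
    exact (summable_norm_sum_mul_antidiagonal_of_summable_norm hf₁ hf₂).of_norm.hasSum

theorem hasSum_integral_convSqCoeff_add_mul (hf : ∀ k, ∀ x ∈ Icc 0 T, ‖f k x‖ ≤ K * (a ^ k / k !))
    (ha : 0 ≤ a) (hT : 0 ≤ T) (hfc : ∀ k, ContinuousOn (f k) (Ici 0))
    (hF : ∀ x ∈ Icc 0 T, HasSum (f · x) (F x)) {w : ℝ → R} {W : ℝ}
    (hwc : ContinuousOn w (Ici 0)) (hw : ∀ x ∈ Icc 0 T, ‖w x‖ ≤ W) :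
    HasSum (fun n => ∫ x in (0 : ℝ)..T, (convSqCoeff f n x + w x * f (n + 1) x))
      (∫ x in (0 : ℝ)..T, (laplaceConv F F x + w x * (F x - f 0 x))) := by
  refine hasSum_intervalIntegral_of_norm_le
    (u := fun n => T * (K ^ 2 * ((2 * a) ^ n / n !)) + W * (K * (a ^ (n + 1) / (n + 1) !)))
    (fun n => (((continuousOn_convSqCoeff hfc n).add (hwc.mul (hfc (n + 1)))).mono
      Icc_subset_Ici_self).intervalIntegrable_of_Icc hT)
    ((((Real.summable_pow_div_factorial _).mul_left _).mul_left _).add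
      (((summable_nat_add_iff 1).2 ((Real.summable_pow_div_factorial a).mul_left K)).mul_left W))
    (fun n x hx => ?_) (fun x hx => ?_) <;>
    replace hx : x ∈ Icc 0 T := Ioc_subset_Icc_self (uIoc_of_le hT ▸ hx)
  · refine (norm_add_le _ _).trans (add_le_add (norm_convSqCoeff_le hf ha hfc hx n) ?_)
    exact (norm_mul_le _ _).trans (mul_le_mul (hw x hx) (hf _ x hx) (norm_nonneg _)
      ((norm_nonneg _).trans (hw x hx)))
  · have hshift := (hasSum_nat_add_iff' 1).2 (hF x hx)
    rw [Finset.sum_range_one] at hshift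
    exact (hasSum_convSqCoeff hf hfc hF hx).add (hshift.mul_left (w x))

end FactorialBound

theorem volterra_system_sum_solves_equation_general
    (L : ℝ) (hL : 0 ≤ L)
    (c : ℂ)
    (w ω : ℝ → ℂ)
    (hwc : ContinuousOn w (Set.Ici 0)) (hωc : ContinuousOn ω (Set.Ici 0))
    (φ : ℕ → ℝ → ℂ) (hφc : ∀ k, ContinuousOn (φ k) (Set.Ici 0))
    (hφ0 : ∀ τ : ℝ, φ 0 τ = c)
    (hφ1 : ∀ τ : ℝ, φ 1 τ = ∫ x in (0 : ℝ)..τ, (w x * φ 0 x + ω x))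
    (hφk : ∀ k, 2 ≤ k → ∀ τ : ℝ, φ k τ
      = ∫ x in (0 : ℝ)..τ,
          ((∑ p ∈ Finset.HasAntidiagonal.antidiagonal (k - 2),
              ∫ s in (0 : ℝ)..x, φ p.1 s * φ p.2 (x - s))
            + w x * φ (k - 1) x))
    (C' M : ℝ) (hC' : 0 < C') (hM : 0 < M)
    (hbound : ∀ k : ℕ, ∀ τ : ℝ, 0 ≤ τ →
      ‖φ k τ‖ ≤ C' * M ^ k * (τ ^ k / (Nat.factorial k : ℝ)) * Real.exp (L * τ))
    (Φ : ℝ → ℂ) (hΦ : ∀ τ : ℝ, Φ τ = ∑' k, φ k τ) :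
    ContinuousOn Φ (Set.Ici 0) ∧
      ∀ τ : ℝ, 0 ≤ τ →
        Φ τ = c + ∫ r in (0 : ℝ)..τ,
          ((∫ s in (0 : ℝ)..r, Φ s * Φ (r - s)) + w r * Φ r + ω r) := by
  have hφT := norm_le_mul_pow_div_factorial_of_le_exp hC'.le hM.le hL hbound
  have hcont : ContinuousOn Φ (Ici 0) :=
    (continuousOn_Ici_tsum hφc fun T =>
      ⟨_, (Real.summable_pow_div_factorial _).mul_left _, hφT T⟩).congr fun x _ => hΦ x
  refine ⟨hcont, fun τ hτ => ?_⟩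
  have hint : ∀ {g : ℝ → ℂ}, ContinuousOn g (Ici 0) → IntervalIntegrable g volume 0 τ :=
    fun hg => (hg.mono Icc_subset_Ici_self).intervalIntegrable_of_Icc hτ
  obtain ⟨W, hW⟩ := isCompact_Icc.exists_bound_of_continuousOn (hwc.mono Icc_subset_Ici_self)
  have hΦτ : ∀ x ∈ Icc 0 τ, HasSum (φ · x) (Φ x) := fun x hx =>
    hΦ x ▸ (summable_norm_of_factorial_bound (hφT τ) hx).of_norm.hasSum
  have hrec : ∀ n, φ (n + 2) τ = ∫ x in (0 : ℝ)..τ, (convSqCoeff φ n x + w x * φ (n + 1) x) :=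
    fun n => hφk (n + 2) (by omega) τ
  have htail := (hasSum_nat_add_iff' 2).2 (hΦτ τ ⟨hτ, le_rfl⟩)
  rw [funext hrec, Finset.sum_range_succ, Finset.sum_range_one] at htail
  have h₁ : IntervalIntegrable (fun r => w r * φ 0 r + ω r) volume 0 τ :=
    hint ((hwc.mul (hφc 0)).add hωc)
  have h₂ : IntervalIntegrable (fun r => laplaceConv Φ Φ r + w r * (Φ r - φ 0 r)) volume 0 τ :=
    hint ((continuousOn_laplaceConv hcont hcont).add (hwc.mul (hcont.sub (hφc 0))))
  calc Φ τ
      = φ 0 τ + φ 1 τ + ∫ r in (0 : ℝ)..τ, (laplaceConv Φ Φ r + w r * (Φ r - φ 0 r)) := by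
        rw [(hasSum_integral_convSqCoeff_add_mul (hφT τ) (by positivity) hτ hφc hΦτ hwc hW).unique
          htail]
        ring
    _ = _ := by
        rw [hφ0 τ, hφ1, add_assoc, ← intervalIntegral.integral_add h₁ h₂]
        congr 1
        refine intervalIntegral.integral_congr fun r _ => ?_
        simp only [laplaceConv]
        ring

/-- The method of successive approximations solves the Borel-transformed Riccati
equation along a trajectory: if the terms `φ_k` of the recursive Volterra system
satisfy geometric-factorial bounds, then `Φ(τ) := Σ_k φ_k(τ)` is continuous on
`[0,∞)` and satisfies the nonlinear Volterra convolution equation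
`Φ(τ) = c + ∫₀^τ ((Φ ∗ Φ)(r) + w(r)Φ(r) + ω(r)) dr`. -/
theorem volterra_system_sum_solves_equation
    (C L : ℝ) (hC : 1 ≤ C) (hL : 0 ≤ L)
    (c : ℂ) (hc : ‖c‖ ≤ C)
    (w ω : ℝ → ℂ)
    (hwc : ContinuousOn w (Set.Ici 0)) (hωc : ContinuousOn ω (Set.Ici 0))
    (hwb : ∀ τ : ℝ, 0 ≤ τ → ‖w τ‖ ≤ C)
    (hωb : ∀ τ : ℝ, 0 ≤ τ → ‖ω τ‖ ≤ C * Real.exp (L * τ))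
    (φ : ℕ → ℝ → ℂ) (hφc : ∀ k, ContinuousOn (φ k) (Set.Ici 0))
    (hφ0 : ∀ τ : ℝ, φ 0 τ = c)
    (hφ1 : ∀ τ : ℝ, φ 1 τ = ∫ x in (0 : ℝ)..τ, (w x * φ 0 x + ω x))
    (hφk : ∀ k, 2 ≤ k → ∀ τ : ℝ, φ k τ
      = ∫ x in (0 : ℝ)..τ,
          ((∑ p ∈ Finset.HasAntidiagonal.antidiagonal (k - 2),
              ∫ s in (0 : ℝ)..x, φ p.1 s * φ p.2 (x - s))
            + w x * φ (k - 1) x))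
    (C' M : ℝ) (hC' : 0 < C') (hM : 0 < M)
    (hbound : ∀ k : ℕ, ∀ τ : ℝ, 0 ≤ τ →
      ‖φ k τ‖ ≤ C' * M ^ k * (τ ^ k / (Nat.factorial k : ℝ)) * Real.exp (L * τ))
    (Φ : ℝ → ℂ) (hΦ : ∀ τ : ℝ, Φ τ = ∑' k, φ k τ) :
    ContinuousOn Φ (Set.Ici 0) ∧
      ∀ τ : ℝ, 0 ≤ τ →
        Φ τ = c + ∫ r in (0 : ℝ)..τ,
          ((∫ s in (0 : ℝ)..r, Φ s * Φ (r - s)) + w r * Φ r + ω r) :=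
  volterra_system_sum_solves_equation_general L hL c w ω hwc hωc φ hφc hφ0 hφ1 hφk C' M hC' hM
    hbound Φ hΦ
end

section
/- Let Ξ ⊆ ℂ be a subset that is closed in ℂ and discrete (every point of Ξ is isolated in Ξ), and suppose 0 ∉ Ξ. Then: (i) Ξ is countable; (ii) the set S := ⋃_{ξ∈Ξ} {t·ξ : t ∈ ℝ, t ≥ 1} of radial cuts is closed in ℂ; and (iii) the complement E := ℂ ∖ S is an open set containing 0 which is star-shaped about 0, i.e. for every z ∈ E and every s ∈ ℝ with 0 ≤ s ≤ 1, the point s·z belongs to E. -/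
/-!
Since `0 ∉ Ξ`, a point `z` lies on a cut iff `s • z ∈ Ξ` for some `s ∈ [0, 1]` (take `s = 1/t`).
So the union of the cuts is the projection to `E` of the closed set `{(s, z) | s • z ∈ Ξ}` of
`[0, 1] × E`, which is closed because `[0, 1]` is compact; and a witness `u` for `s • z` with
`s ∈ [0, 1]` gives the witness `u * s` for `z`, so the complement is star-shaped. Countability of `Ξ` holds because
a discrete subset of a second-countable space is countable.
-/

open Set unitInterval

section RadialCuts

variable {E : Type*} [AddCommGroup E] [Module ℝ E]

def radialCuts (Ξ : Set E) : Set E :=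
  {z | ∃ ξ ∈ Ξ, ∃ t : ℝ, 1 ≤ t ∧ z = t • ξ}

theorem mem_radialCuts_iff {Ξ : Set E} (h0 : (0 : E) ∉ Ξ) {z : E} :
    z ∈ radialCuts Ξ ↔ ∃ s ∈ I, s • z ∈ Ξ := by
  constructor
  · rintro ⟨ξ, hξ, t, ht, rfl⟩
    have ht0 : t ≠ 0 := by positivity
    refine ⟨t⁻¹, ⟨by positivity, inv_le_one_of_one_le₀ ht⟩, ?_⟩
    rwa [smul_smul, inv_mul_cancel₀ ht0, one_smul]
  · rintro ⟨s, ⟨hs0, hs1⟩, hsz⟩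
    have hs : s ≠ 0 := by
      rintro rfl
      exact h0 (by rwa [zero_smul] at hsz)
    refine ⟨s • z, hsz, s⁻¹, one_le_inv₀ (hs0.lt_of_ne' hs) |>.2 hs1, ?_⟩
    rw [smul_smul, inv_mul_cancel₀ hs, one_smul]

theorem zero_notMem_radialCuts {Ξ : Set E} (h0 : (0 : E) ∉ Ξ) : (0 : E) ∉ radialCuts Ξ := by
  rw [mem_radialCuts_iff h0]
  rintro ⟨s, -, hs⟩
  exact h0 (by rwa [smul_zero] at hs)

theorem smul_notMem_radialCuts {Ξ : Set E} (h0 : (0 : E) ∉ Ξ) {z : E} (hz : z ∉ radialCuts Ξ)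
    {s : ℝ} (hs : s ∈ I) : s • z ∉ radialCuts Ξ := by
  rw [mem_radialCuts_iff h0] at hz ⊢
  rintro ⟨u, hu, huz⟩
  exact hz ⟨u * s, mul_mem hu hs, by rwa [mul_smul]⟩

theorem isClosed_radialCuts [TopologicalSpace E] [ContinuousSMul ℝ E] {Ξ : Set E}
    (hΞ : IsClosed Ξ) (h0 : (0 : E) ∉ Ξ) : IsClosed (radialCuts Ξ) := by
  have hproj : radialCuts Ξ = Prod.snd '' {p : I × E | (p.1 : ℝ) • p.2 ∈ Ξ} := by
    ext z
    simp [mem_radialCuts_iff h0]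
  rw [hproj]
  exact isClosedMap_snd_of_compactSpace _ <|
    hΞ.preimage (continuous_subtype_val.fst'.smul continuous_snd)

end RadialCuts

/-- The holomorphic star at the origin: if `Ξ ⊆ ℂ` is closed, discrete, and avoids `0`,
then `Ξ` is countable, the union `S` of the radial cuts `{t·ξ : t ≥ 1}` (`ξ ∈ Ξ`) is
closed, and its complement `E` is an open set containing `0` that is star-shaped
about `0`. -/
theorem holomorphic_star_at_origin
    (Ξ : Set ℂ) (hclosed : IsClosed Ξ)
    (hdisc : ∀ ξ ∈ Ξ, ∃ U : Set ℂ, IsOpen U ∧ ξ ∈ U ∧ U ∩ Ξ = {ξ})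
    (h0 : (0 : ℂ) ∉ Ξ)
    (S : Set ℂ)
    (hS : S = {z : ℂ | ∃ ξ ∈ Ξ, ∃ t : ℝ, 1 ≤ t ∧ z = (t : ℂ) * ξ})
    (E : Set ℂ) (hE : E = Sᶜ) :
    Ξ.Countable ∧ IsClosed S ∧ IsOpen E ∧ (0 : ℂ) ∈ E ∧
      ∀ z ∈ E, ∀ s : ℝ, 0 ≤ s → s ≤ 1 → (s : ℂ) * z ∈ E := by
  have hS_cuts : S = radialCuts Ξ := by
    simp only [hS, radialCuts, Complex.real_smul]
  have hdiscrete : IsDiscrete Ξ := isDiscrete_iff_forall_mem_exists_isOpen.2 fun ξ hξ =>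
    let ⟨U, hU, _, hUΞ⟩ := hdisc ξ hξ
    ⟨U, hU, hUΞ⟩
  subst hE
  rw [hS_cuts]
  refine ⟨(HereditarilyLindelofSpace.isLindelof Ξ).countable_of_isDiscrete hdiscrete,
    isClosed_radialCuts hclosed h0, (isClosed_radialCuts hclosed h0).isOpen_compl,
    zero_notMem_radialCuts h0, fun z hz s hs0 hs1 => ?_⟩
  rw [← Complex.real_smul]
  exact smul_notMem_radialCuts h0 hz ⟨hs0, hs1⟩
end
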